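/- arXiv:2403.16626 — 2 statements merged into one kernel-verified Lean document; each statement's English description precedes it below -/
import Mathlib

section
/- Every step sequence (i.e., every ~-equivalence class of coherent words of starters and terminators) contains exactly one sparse representative. -/
set_option maxHeartbeats 1000000

universe u v w

/-- An ipomset over event universe `E` and alphabet `A`:
a finite set of events with a precedence order `lt`, an event order `evord`,
source and target sets, and a labeling. -/
structure Ipomset (E : Type u) (A : Type v) where
  events : Finset E
  lt : E → E → Prop
  evord : E → E → Prop
  src : Finset E
  tgt : Finset E
  lab : E → A
  lt_mem : ∀ {x y}, lt x y → x ∈ events ∧ y ∈ events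
  evord_mem : ∀ {x y}, evord x y → x ∈ events ∧ y ∈ events
  lt_irrefl : ∀ x, ¬ lt x x
  lt_trans : ∀ {x y z}, lt x y → lt y z → lt x z
  evord_irrefl : ∀ x, ¬ evord x x
  evord_trans : ∀ {x y z}, evord x y → evord y z → evord x z
  order_total : ∀ {x y}, x ∈ events → y ∈ events → x ≠ y →
      lt x y ∨ lt y x ∨ evord x y ∨ evord y x
  src_sub : src ⊆ events
  tgt_sub : tgt ⊆ events
  src_min : ∀ {x y}, x ∈ src → ¬ lt y x
  tgt_max : ∀ {x y}, x ∈ tgt → ¬ lt x y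

namespace Ipomset

variable {E : Type u} {A : Type v}

/-- An ipomset is interval if its precedence order admits an interval representation. -/
def Interval (P : Ipomset E A) : Prop :=
  ∃ b e : E → ℝ, (∀ x ∈ P.events, b x ≤ e x) ∧
    ∀ x ∈ P.events, ∀ y ∈ P.events, (P.lt x y ↔ e x < b y)

/-- Discrete: empty precedence order. -/
def Discrete (P : Ipomset E A) : Prop := ∀ x y, ¬ P.lt x y

/-- A starter is a discrete ipomset with `tgt = events`. -/
def Starter (P : Ipomset E A) : Prop := P.Discrete ∧ P.tgt = P.events

/-- A terminator is a discrete ipomset with `src = events`. -/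
def Terminator (P : Ipomset E A) : Prop := P.Discrete ∧ P.src = P.events

/-- An identity is a discrete ipomset with `src = tgt = events`. -/
def IsIdentity (P : Ipomset E A) : Prop :=
  P.Discrete ∧ P.src = P.events ∧ P.tgt = P.events

end Ipomset

/-- A conclist: a finite set with a strict total order (the event order) and labeling. -/
structure Conclist (E : Type u) (A : Type v) where
  events : Finset E
  evord : E → E → Prop
  lab : E → Option A
  evord_mem : ∀ {x y}, evord x y → x ∈ events ∧ y ∈ events
  evord_irrefl : ∀ x, ¬ evord x x
  evord_trans : ∀ {x y z}, evord x y → evord y z → evord x z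
  evord_total : ∀ {x y}, x ∈ events → y ∈ events → x ≠ y → evord x y ∨ evord y x

variable {E : Type u} {A : Type v}

/-- The source interface of an ipomset: the conclist on its source set. -/
def Ipomset.srcIface [DecidableEq E] (P : Ipomset E A) : Conclist E A where
  events := P.src
  evord x y := x ∈ P.src ∧ y ∈ P.src ∧ P.evord x y
  lab x := if x ∈ P.src then some (P.lab x) else none
  evord_mem h := ⟨h.1, h.2.1⟩
  evord_irrefl x h := P.evord_irrefl x h.2.2
  evord_trans h1 h2 := ⟨h1.1, h2.2.1, P.evord_trans h1.2.2 h2.2.2⟩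
  evord_total {x y} hx hy hxy := by
    rcases P.order_total (P.src_sub hx) (P.src_sub hy) hxy with h | h | h | h
    · exact absurd h (P.src_min hy)
    · exact absurd h (P.src_min hx)
    · exact Or.inl ⟨hx, hy, h⟩
    · exact Or.inr ⟨hy, hx, h⟩

/-- The target interface of an ipomset: the conclist on its target set. -/
def Ipomset.tgtIface [DecidableEq E] (P : Ipomset E A) : Conclist E A where
  events := P.tgt
  evord x y := x ∈ P.tgt ∧ y ∈ P.tgt ∧ P.evord x y
  lab x := if x ∈ P.tgt then some (P.lab x) else none
  evord_mem h := ⟨h.1, h.2.1⟩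
  evord_irrefl x h := P.evord_irrefl x h.2.2
  evord_trans h1 h2 := ⟨h1.1, h2.2.1, P.evord_trans h1.2.2 h2.2.2⟩
  evord_total {x y} hx hy hxy := by
    rcases P.order_total (P.tgt_sub hx) (P.tgt_sub hy) hxy with h | h | h | h
    · exact absurd h (P.tgt_max hx)
    · exact absurd h (P.tgt_max hy)
    · exact Or.inl ⟨hx, hy, h⟩
    · exact Or.inr ⟨hy, hx, h⟩

/-- `f` is an isomorphism of ipomsets from `P` to `Q`. -/
structure IsIpoIso (P Q : Ipomset E A) (f : E → E) : Prop where
  maps : ∀ x ∈ P.events, f x ∈ Q.events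
  inj : ∀ x ∈ P.events, ∀ y ∈ P.events, f x = f y → x = y
  surj : ∀ y ∈ Q.events, ∃ x ∈ P.events, f x = y
  src_iff : ∀ x ∈ P.events, (x ∈ P.src ↔ f x ∈ Q.src)
  tgt_iff : ∀ x ∈ P.events, (x ∈ P.tgt ↔ f x ∈ Q.tgt)
  lab_eq : ∀ x ∈ P.events, Q.lab (f x) = P.lab x
  lt_iff : ∀ x ∈ P.events, ∀ y ∈ P.events, (Q.lt (f x) (f y) ↔ P.lt x y)
  evord_iff : ∀ x ∈ P.events, ∀ y ∈ P.events, ¬ P.lt x y → ¬ P.lt y x →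
      (P.evord x y ↔ Q.evord (f x) (f y))

/-- `P ≅ Q`: there is an isomorphism of ipomsets from `P` to `Q`. -/
def IpoIso (P Q : Ipomset E A) : Prop := ∃ f, IsIpoIso P Q f

/-- `f` is a subsumption of ipomsets from `P` to `Q`. -/
structure IsSubsumption (P Q : Ipomset E A) (f : E → E) : Prop where
  maps : ∀ x ∈ P.events, f x ∈ Q.events
  inj : ∀ x ∈ P.events, ∀ y ∈ P.events, f x = f y → x = y
  surj : ∀ y ∈ Q.events, ∃ x ∈ P.events, f x = y
  src_iff : ∀ x ∈ P.events, (x ∈ P.src ↔ f x ∈ Q.src)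
  tgt_iff : ∀ x ∈ P.events, (x ∈ P.tgt ↔ f x ∈ Q.tgt)
  lab_eq : ∀ x ∈ P.events, Q.lab (f x) = P.lab x
  lt_imp : ∀ x ∈ P.events, ∀ y ∈ P.events, Q.lt (f x) (f y) → P.lt x y
  evord_imp : ∀ x ∈ P.events, ∀ y ∈ P.events, ¬ P.lt x y → ¬ P.lt y x →
      P.evord x y → Q.evord (f x) (f y)

/-- `P ⊑ Q`: there is a subsumption from `P` to `Q`. -/
def Subsumes (P Q : Ipomset E A) : Prop := ∃ f, IsSubsumption P Q f

/-- `P ⊏ Q`: `P ⊑ Q` and `P` and `Q` are not isomorphic. -/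
def StrictSubsumes (P Q : Ipomset E A) : Prop := Subsumes P Q ∧ ¬ IpoIso P Q

/-- `f` is an isomorphism of conclists from `U` to `V`. -/
structure IsClIso (U V : Conclist E A) (f : E → E) : Prop where
  maps : ∀ x ∈ U.events, f x ∈ V.events
  inj : ∀ x ∈ U.events, ∀ y ∈ U.events, f x = f y → x = y
  surj : ∀ y ∈ V.events, ∃ x ∈ U.events, f x = y
  lab_eq : ∀ x ∈ U.events, V.lab (f x) = U.lab x
  evord_iff : ∀ x ∈ U.events, ∀ y ∈ U.events, (U.evord x y ↔ V.evord (f x) (f y))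

/-- `U ≅ V` for conclists. -/
def ClIso (U V : Conclist E A) : Prop := ∃ f, IsClIso U V f

/-- `P` and `Q` are composable representatives: the target interface of `P` coincides
with the source interface of `Q` and is exactly the overlap of the event sets. -/
def Composable [DecidableEq E] (P Q : Ipomset E A) : Prop :=
  P.tgtIface = Q.srcIface ∧ P.events ∩ Q.events = P.tgt

/-- One step of the glued precedence order. -/
def glueStep (P Q : Ipomset E A) (x y : E) : Prop :=
  P.lt x y ∨ Q.lt x y ∨
    (x ∈ P.events ∧ x ∉ P.tgt ∧ y ∈ Q.events ∧ y ∉ Q.src)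

/-- The glued precedence order: transitive closure. -/
def glueLt (P Q : Ipomset E A) : E → E → Prop :=
  Relation.TransGen (glueStep P Q)

/-- The glued event order: the union of the two event orders. -/
def glueEvord (P Q : Ipomset E A) (x y : E) : Prop :=
  P.evord x y ∨ Q.evord x y

/-- `R` is the gluing of the composable representatives `P` and `Q`. -/
def IsGlueOf [DecidableEq E] (P Q R : Ipomset E A) : Prop :=
  Composable P Q ∧
  R.events = P.events ∪ Q.events ∧
  (∀ x y, R.lt x y ↔ glueLt P Q x y) ∧
  (∀ x y, R.evord x y ↔ glueEvord P Q x y) ∧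
  R.src = P.src ∧ R.tgt = Q.tgt ∧
  (∀ x ∈ P.events, R.lab x = P.lab x) ∧
  (∀ x ∈ Q.events, R.lab x = Q.lab x)

/-- `R ≅ P * Q`: up to isomorphism, `R` is the gluing of `P` and `Q`. -/
def IsGluing [DecidableEq E] (P Q R : Ipomset E A) : Prop :=
  ∃ P' Q' R', IpoIso P P' ∧ IpoIso Q Q' ∧ IpoIso R R' ∧ IsGlueOf P' Q' R'

/-- A letter of a step sequence: a starter or a terminator. -/
def StepLetter (P : Ipomset E A) : Prop := P.Starter ∨ P.Terminator

/-- A word of starters and terminators is coherent if consecutive interfaces match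
(as isomorphism classes of conclists). -/
def Coherent [DecidableEq E] (w : List (Ipomset E A)) : Prop :=
  (∀ P ∈ w, StepLetter P) ∧
  w.Chain' (fun P Q => ClIso P.tgtIface Q.srcIface)

/-- The congruence `~` on coherent words: generated by composing two subsequent
starters or two subsequent terminators, removing/inserting identities, and
replacing letters by isomorphic ones. -/
inductive StepEquiv {E : Type u} {A : Type v} [DecidableEq E] :
    List (Ipomset E A) → List (Ipomset E A) → Prop
  | glue (u v : List (Ipomset E A)) (P Q R : Ipomset E A) :
      Coherent (u ++ P :: Q :: v) →
      ((P.Starter ∧ Q.Starter) ∨ (P.Terminator ∧ Q.Terminator)) →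
      IsGluing P Q R →
      StepEquiv (u ++ P :: Q :: v) (u ++ R :: v)
  | ident (u v : List (Ipomset E A)) (P : Ipomset E A) :
      Coherent (u ++ P :: v) → P.IsIdentity → u ++ v ≠ [] →
      StepEquiv (u ++ P :: v) (u ++ v)
  | iso (u v : List (Ipomset E A)) (P Q : Ipomset E A) :
      Coherent (u ++ P :: v) → IpoIso P Q →
      StepEquiv (u ++ P :: v) (u ++ Q :: v)
  | refl (w : List (Ipomset E A)) : StepEquiv w w
  | symm {w₁ w₂ : List (Ipomset E A)} : StepEquiv w₁ w₂ → StepEquiv w₂ w₁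
  | trans {w₁ w₂ w₃ : List (Ipomset E A)} :
      StepEquiv w₁ w₂ → StepEquiv w₂ w₃ → StepEquiv w₁ w₃

/-- `R` is (up to isomorphism) the gluing `P₁ * ⋯ * Pₙ` of the word `w = P₁ ⋯ Pₙ`. -/
inductive GlueWord {E : Type u} {A : Type v} [DecidableEq E] :
    List (Ipomset E A) → Ipomset E A → Prop
  | single (P : Ipomset E A) : GlueWord [P] P
  | cons (P : Ipomset E A) (w : List (Ipomset E A)) (R S : Ipomset E A) :
      GlueWord w R → IsGluing P R S → GlueWord (P :: w) S

/-- The discrete ipomset on sub-conclist `V` of the discrete ipomset `W`,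
with sources `S` and targets `T`. -/
def letterOf [DecidableEq E] (W : Ipomset E A) (hW : W.Discrete)
    (V S T : Finset E) : Ipomset E A where
  events := V ∩ W.events
  lt _ _ := False
  evord x y := x ∈ V ∩ W.events ∧ y ∈ V ∩ W.events ∧ W.evord x y
  src := S ∩ (V ∩ W.events)
  tgt := T ∩ (V ∩ W.events)
  lab := W.lab
  lt_mem h := h.elim
  evord_mem h := ⟨h.1, h.2.1⟩
  lt_irrefl _ h := h
  lt_trans h := h.elim
  evord_irrefl x h := W.evord_irrefl x h.2.2
  evord_trans h1 h2 := ⟨h1.1, h2.2.1, W.evord_trans h1.2.2 h2.2.2⟩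
  order_total {x y} hx hy hxy := by
    rcases W.order_total (Finset.mem_inter.mp hx).2 (Finset.mem_inter.mp hy).2 hxy
      with h | h | h | h
    · exact absurd h (hW _ _)
    · exact absurd h (hW _ _)
    · exact Or.inr (Or.inr (Or.inl ⟨hx, hy, h⟩))
    · exact Or.inr (Or.inr (Or.inr ⟨hy, hx, h⟩))
  src_sub := Finset.inter_subset_right
  tgt_sub := Finset.inter_subset_right
  src_min _ h := h
  tgt_max _ h := h

/-- `V↑B`: the starter on the conclist `V` (inside `W`) starting the events of `B`. -/
def upOn [DecidableEq E] (W : Ipomset E A) (hW : W.Discrete) (V B : Finset E) :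
    Ipomset E A :=
  letterOf W hW V (V \ B) V

/-- `V↓B`: the terminator on the conclist `V` (inside `W`) terminating the events of `B`. -/
def downOn [DecidableEq E] (W : Ipomset E A) (hW : W.Discrete) (V B : Finset E) :
    Ipomset E A :=
  letterOf W hW V V (V \ B)

/-- The transposition relation: `TranspAt w w'` holds iff `w' = τᵢ(w)` for some `i`. -/
inductive TranspAt {E : Type u} {A : Type v} [DecidableEq E] :
    List (Ipomset E A) → List (Ipomset E A) → Prop
  | ss (u v : List (Ipomset E A)) (W : Ipomset E A) (hW : W.Discrete)
      (Aa Bb : Finset E) (hA : Aa ⊆ W.events) (hB : Bb ⊆ W.events)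
      (hd : Disjoint Aa Bb) :
      TranspAt (u ++ upOn W hW (W.events \ Bb) Aa :: upOn W hW W.events Bb :: v)
               (u ++ upOn W hW (W.events \ Aa) Bb :: upOn W hW W.events Aa :: v)
  | tt (u v : List (Ipomset E A)) (W : Ipomset E A) (hW : W.Discrete)
      (Aa Bb : Finset E) (hA : Aa ⊆ W.events) (hB : Bb ⊆ W.events)
      (hd : Disjoint Aa Bb) :
      TranspAt (u ++ downOn W hW W.events Aa :: downOn W hW (W.events \ Aa) Bb :: v)
               (u ++ downOn W hW W.events Bb :: downOn W hW (W.events \ Bb) Aa :: v)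
  | st (u v : List (Ipomset E A)) (W : Ipomset E A) (hW : W.Discrete)
      (Aa Bb : Finset E) (hA : Aa ⊆ W.events) (hB : Bb ⊆ W.events)
      (hd : Disjoint Aa Bb) :
      TranspAt (u ++ upOn W hW W.events Aa :: downOn W hW W.events Bb :: v)
               (u ++ downOn W hW (W.events \ Aa) Bb :: upOn W hW (W.events \ Bb) Aa :: v)
  | ts (u v : List (Ipomset E A)) (W : Ipomset E A) (hW : W.Discrete)
      (Aa Bb : Finset E) (hA : Aa ⊆ W.events) (hB : Bb ⊆ W.events)
      (hd : Disjoint Aa Bb) :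
      TranspAt (u ++ downOn W hW (W.events \ Bb) Aa :: upOn W hW (W.events \ Aa) Bb :: v)
               (u ++ upOn W hW W.events Bb :: downOn W hW W.events Aa :: v)

/-- A word is dense if every letter starts or terminates exactly one event. -/
def DenseWord [DecidableEq E] (w : List (Ipomset E A)) : Prop :=
  ∀ P ∈ w, (P.Starter ∧ (P.events \ P.src).card = 1) ∨
    (P.Terminator ∧ (P.events \ P.tgt).card = 1)

/-- There is a chain of transpositions from `w₁` to `w₂` through dense coherent words
all satisfying `pred`. -/
def TranspChain [DecidableEq E] (pred : List (Ipomset E A) → Prop)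
    (w₁ w₂ : List (Ipomset E A)) : Prop :=
  ∃ us : List (List (Ipomset E A)),
    us.head? = some w₁ ∧ us.getLast? = some w₂ ∧
    us.Chain' TranspAt ∧ ∀ u ∈ us, DenseWord u ∧ Coherent u ∧ pred u

/-- A word is sparse if it is a single identity, or its letters are non-identity
starters and terminators which strictly alternate. -/
def SparseWord [DecidableEq E] (w : List (Ipomset E A)) : Prop :=
  (∃ P, w = [P] ∧ P.IsIdentity) ∨
  ((∀ P ∈ w, StepLetter P ∧ ¬ P.IsIdentity) ∧
    w.Chain' (fun P Q => (P.Starter ∧ Q.Terminator) ∨ (P.Terminator ∧ Q.Starter)))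

/-- `w` is THE sparse step decomposition of `P` (up to the chosen representatives). -/
def SparseDecomp [DecidableEq E] (P : Ipomset E A) (w : List (Ipomset E A)) : Prop :=
  SparseWord w ∧ Coherent w ∧ ∃ R, GlueWord w R ∧ IpoIso R P

/-- The transposition exchanging a starter followed by a terminator
(third case of the definition of transpositions): `TranspST w tw` iff `tw = τᵢ(w)`
where the `i`-th factor of `w` is `U↑A · U↓B`. -/
def TranspST [DecidableEq E] (w tw : List (Ipomset E A)) : Prop :=
  ∃ (u v : List (Ipomset E A)) (W : Ipomset E A) (hW : W.Discrete)
    (Aa Bb : Finset E), Aa ⊆ W.events ∧ Bb ⊆ W.events ∧ Disjoint Aa Bb ∧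
    w = u ++ upOn W hW W.events Aa :: downOn W hW W.events Bb :: v ∧
    tw = u ++ downOn W hW (W.events \ Aa) Bb :: upOn W hW (W.events \ Bb) Aa :: v

/-- `w₂ <ₑ w₁` on step sequences: some representative of `w₂` is obtained from a
representative of `w₁` by a starter-terminator transposition. -/
def LtE [DecidableEq E] (w₂ w₁ : List (Ipomset E A)) : Prop :=
  ∃ w₁' w₂', StepEquiv w₁ w₁' ∧ StepEquiv w₂ w₂' ∧ TranspST w₁' w₂'

/-- `≤`: the reflexive-transitive closure of `<ₑ` on step sequences. -/
def StepLe [DecidableEq E] (w₁ w₂ : List (Ipomset E A)) : Prop :=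
  Relation.ReflTransGen (fun x y => LtE x y ∨ StepEquiv x y) w₁ w₂

/-- A higher-dimensional automaton: cells labelled by conclists (identity ipomsets),
face maps satisfying the precubical identities, start and accept cells. -/
structure HDA (X : Type w) (E : Type u) (A : Type v) [DecidableEq E] where
  ev : X → Ipomset E A
  ev_id : ∀ q, (ev q).IsIdentity
  face : Bool → Finset E → X → X
  face_ev : ∀ (b : Bool) (B : Finset E) (q : X), B ⊆ (ev q).events →
    ev (face b B q) =
      letterOf (ev q) (ev_id q).1 ((ev q).events \ B) ((ev q).events \ B)
        ((ev q).events \ B)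
  face_comm : ∀ (b c : Bool) (B C : Finset E) (q : X), Disjoint B C →
    B ⊆ (ev q).events → C ⊆ (ev q).events →
    face b B (face c C q) = face c C (face b B q)
  start : Set X
  accept : Set X

/-- Paths in an HDA, together with their event words (interleaving identities). -/
inductive HPath {X : Type w} {E : Type u} {A : Type v} [DecidableEq E]
    (H : HDA X E A) : X → X → List (Ipomset E A) → Prop
  | nil (q : X) : HPath H q q [H.ev q]
  | up (q p r : X) (w : List (Ipomset E A)) (B : Finset E)
      (hB : B ⊆ (H.ev p).events) :
      q = H.face false B p → HPath H p r w →
      HPath H q r (upOn (H.ev p) (H.ev_id p).1 (H.ev p).events B :: w)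
  | down (p q r : X) (w : List (Ipomset E A)) (B : Finset E)
      (hB : B ⊆ (H.ev p).events) :
      q = H.face true B p → HPath H q r w →
      HPath H p r (downOn (H.ev p) (H.ev_id p).1 (H.ev p).events B :: w)

/-- The language of an HDA: event ipomsets of accepting paths, closed under iso. -/
def HLang {X : Type w} [DecidableEq E] (H : HDA X E A) : Set (Ipomset E A) :=
  {P | ∃ q r w R, q ∈ H.start ∧ r ∈ H.accept ∧ HPath H q r w ∧
    GlueWord w R ∧ IpoIso R P}

/-- An ST-automaton: states labelled by conclists (identity ipomsets), edges labelled
by starters and terminators consistently with the state labels. -/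
structure STAut (Q : Type w) (E : Type u) (A : Type v) [DecidableEq E] where
  lab : Q → Ipomset E A
  lab_id : ∀ q, (lab q).IsIdentity
  edge : Q → Ipomset E A → Q → Prop
  edge_st : ∀ {q P r}, edge q P r → StepLetter P
  edge_src : ∀ {q P r}, edge q P r → P.srcIface = (lab q).srcIface
  edge_tgt : ∀ {q P r}, edge q P r → P.tgtIface = (lab r).srcIface
  start : Set Q
  accept : Set Q

/-- Paths in an ST-automaton together with their labels
`id_{λ(q₀)} P₁ id_{λ(q₁)} ⋯ Pₙ id_{λ(qₙ)}`. -/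
inductive STPath {Q : Type w} {E : Type u} {A : Type v} [DecidableEq E]
    (S : STAut Q E A) : Q → Q → List (Ipomset E A) → Prop
  | nil (q : Q) : STPath S q q [S.lab q]
  | cons (q p r : Q) (P : Ipomset E A) (w : List (Ipomset E A)) :
      S.edge q P p → STPath S p r w → STPath S q r (S.lab q :: P :: w)

/-- The language of an ST-automaton: the `~`-classes of labels of accepting paths
(as a `~`-saturated set of words). -/
def STLang {Q : Type w} [DecidableEq E] (S : STAut Q E A) :
    Set (List (Ipomset E A)) :=
  {w | ∃ q r w', q ∈ S.start ∧ r ∈ S.accept ∧ STPath S q r w' ∧ StepEquiv w w'}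

/-- `S` is the ST-automaton `ST(X)` associated to the HDA `H`. -/
def IsSTof {X : Type w} [DecidableEq E] (H : HDA X E A) (S : STAut X E A) : Prop :=
  S.lab = H.ev ∧ S.start = H.start ∧ S.accept = H.accept ∧
  ∀ q P r, S.edge q P r ↔
    ((∃ B, ∃ _ : B ⊆ (H.ev r).events, q = H.face false B r ∧
        P = upOn (H.ev r) (H.ev_id r).1 (H.ev r).events B) ∨
     (∃ B, ∃ _ : B ⊆ (H.ev q).events, r = H.face true B q ∧
        P = downOn (H.ev q) (H.ev_id q).1 (H.ev q).events B))

/-- The image of a set of ipomsets under `Φ` (sparse step decomposition),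
as a `~`-saturated set of words. -/
def PhiImage [DecidableEq E] (L : Set (Ipomset E A)) : Set (List (Ipomset E A)) :=
  {w | ∃ P ∈ L, ∃ w', SparseDecomp P w' ∧ StepEquiv w w'}

/-- The image of a set of words under `Ψ` (gluing), as an iso-saturated set of ipomsets. -/
def PsiImage [DecidableEq E] (L : Set (List (Ipomset E A))) : Set (Ipomset E A) :=
  {P | ∃ w ∈ L, ∃ R, GlueWord w R ∧ IpoIso R P}

/-- `H` together with `ι` realizes the HDA `HD(S)` obtained from the ST-automaton `S`:
cells of `S` embed via `ι` compatibly with labels, start/accept cells, and each edge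
of `S` is realized by a face map of `H`. -/
def SimulatesST {Q : Type w} {X : Type w} [DecidableEq E]
    (S : STAut Q E A) (H : HDA X E A) (ι : Q → X) : Prop :=
  (∀ q, H.ev (ι q) = S.lab q) ∧
  (∀ q ∈ S.start, ι q ∈ H.start) ∧
  (∀ q ∈ S.accept, ι q ∈ H.accept) ∧
  ∀ q P r, S.edge q P r →
    ((∃ B, ∃ _ : B ⊆ (H.ev (ι r)).events, ι q = H.face false B (ι r) ∧
        P = upOn (H.ev (ι r)) (H.ev_id (ι r)).1 (H.ev (ι r)).events B) ∨
     (∃ B, ∃ _ : B ⊆ (H.ev (ι q)).events, ι r = H.face true B (ι q) ∧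
        P = downOn (H.ev (ι q)) (H.ev_id (ι q)).1 (H.ev (ι q)).events B))

/-!
A discrete ipomset is determined up to isomorphism by its code: its events in event order, each
with its label and its source and target flags. Gluing two starters, or two terminators, becomes an
explicit operation on codes, and a coherent word of codes has a normal form, computed from left to
right by gluing each letter onto the previous one whenever both are starters or both are
terminators (an identity is both, so it is absorbed). Every generator of `~` preserves the normal
form of the word of codes, and a sparse word is its own normal form; so two sparse representatives
of one step sequence have the same codes letter by letter, and their letters are isomorphic.
For existence, gluing two adjacent letters of the same type shortens a word, and a coherent word
without such a pair is sparse.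
-/

/-! ### Sorted enumerations -/

section SortedOf

variable {α : Type*} {r : α → α → Prop}

structure SortedOf (r : α → α → Prop) (s : Finset α) (l : List α) : Prop where
  mem_iff : ∀ x, x ∈ l ↔ x ∈ s
  nodup : l.Nodup
  pairwise : l.Pairwise r

theorem exists_sortedOf (htrans : ∀ x y z, r x y → r y z → r x z) (hirr : ∀ x, ¬ r x x)
    (s : Finset α) (htot : ∀ x ∈ s, ∀ y ∈ s, x ≠ y → r x y ∨ r y x) :
    ∃ l, SortedOf r s l := by
  classical
  induction s using Finset.induction_on with
  | empty => exact ⟨[], by simp, List.nodup_nil, List.Pairwise.nil⟩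
  | @insert a s ha ih =>
    obtain ⟨l, hmem, hnd, hpw⟩ :=
      ih fun x hx y hy => htot x (by simp [hx]) y (by simp [hy])
    have hlt : ∀ x ∈ l, r x a ∨ r a x := fun x hx =>
      htot x (by simp [(hmem x).1 hx]) a (by simp) (by rintro rfl; exact ha ((hmem x).1 hx))
    -- insert `a` between its predecessors and its successors
    refine ⟨l.filter (r · a) ++ a :: l.filter (r a ·), fun x => ?_, ?_, ?_⟩
    · by_cases hxa : x = a
      · simp [hxa]
      · simp only [List.mem_append, List.mem_filter, List.mem_cons, decide_eq_true_eq, hxa,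
          false_or, Finset.mem_insert, hmem]
        constructor
        · rintro (h | h) <;> exact h.1
        · intro hx
          rcases hlt x ((hmem x).2 hx) with h | h
          exacts [Or.inl ⟨hx, h⟩, Or.inr ⟨hx, h⟩]
    · refine List.nodup_append.2 ⟨hnd.filter _, List.nodup_cons.2 ⟨?_, hnd.filter _⟩, ?_⟩
      · exact fun h => ha ((hmem a).1 (List.mem_of_mem_filter h))
      · intro x hx y hy hxy
        subst hxy
        have hxa : r x a := by simpa using (List.mem_filter.1 hx).2
        rcases List.mem_cons.1 hy with rfl | hy
        · exact hirr x hxa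
        · exact hirr x (htrans _ _ _ hxa (by simpa using (List.mem_filter.1 hy).2))
    · refine List.pairwise_append.2 ⟨hpw.filter _, List.pairwise_cons.2 ⟨?_, hpw.filter _⟩, ?_⟩
      · intro y hy; simpa using (List.mem_filter.1 hy).2
      · intro x hx y hy
        have hxa : r x a := by simpa using (List.mem_filter.1 hx).2
        rcases List.mem_cons.1 hy with rfl | hy
        · exact hxa
        · exact htrans _ _ _ hxa (by simpa using (List.mem_filter.1 hy).2)

theorem SortedOf.eq {s : Finset α} {l₁ l₂ : List α} (h₁ : SortedOf r s l₁)
    (h₂ : SortedOf r s l₂) (htrans : ∀ x y z, r x y → r y z → r x z) (hirr : ∀ x, ¬ r x x) :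
    l₁ = l₂ := by
  refine List.Perm.eq_of_pairwise (fun a b _ _ h h' => absurd (htrans _ _ _ h h') (hirr a))
    h₁.pairwise h₂.pairwise ((List.perm_ext_iff_of_nodup h₁.nodup h₂.nodup).2 fun x => ?_)
  rw [h₁.mem_iff, h₂.mem_iff]

theorem SortedOf.map {β : Type*} {r' : β → β → Prop} {s : Finset α} {t : Finset β} {l : List α}
    (h : SortedOf r s l) (f : α → β) (hmaps : ∀ x ∈ s, f x ∈ t)
    (hinj : ∀ x ∈ s, ∀ y ∈ s, f x = f y → x = y) (hsurj : ∀ y ∈ t, ∃ x ∈ s, f x = y)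
    (hrel : ∀ x ∈ s, ∀ y ∈ s, r x y → r' (f x) (f y)) :
    SortedOf r' t (l.map f) where
  mem_iff y := by
    simp only [List.mem_map, h.mem_iff]
    exact ⟨fun ⟨x, hx, hxy⟩ => hxy ▸ hmaps x hx, hsurj y⟩
  nodup := h.nodup.map_on fun x hx y hy => hinj x ((h.mem_iff x).1 hx) y ((h.mem_iff y).1 hy)
  pairwise := List.pairwise_map.2 <| h.pairwise.imp_of_mem fun hx hy =>
    hrel _ ((h.mem_iff _).1 hx) _ ((h.mem_iff _).1 hy)

theorem SortedOf.filter {r' : α → α → Prop} {s t : Finset α} {l : List α} [DecidablePred (· ∈ t)]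
    (h : SortedOf r s l) (hts : t ⊆ s) (hrel : ∀ x ∈ t, ∀ y ∈ t, r x y → r' x y) :
    SortedOf r' t (l.filter (· ∈ t)) where
  mem_iff x := by
    simp only [List.mem_filter, h.mem_iff, decide_eq_true_eq]
    exact ⟨And.right, fun hx => ⟨hts hx, hx⟩⟩
  nodup := h.nodup.filter _
  pairwise := (h.pairwise.filter _).imp_of_mem fun hx hy => by
    simp only [List.mem_filter, decide_eq_true_eq] at hx hy
    exact hrel _ hx.2 _ hy.2

theorem SortedOf.rel_getElem_iff {s : Finset α} {l : List α} (h : SortedOf r s l)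
    (htrans : ∀ x y z, r x y → r y z → r x z) (hirr : ∀ x, ¬ r x x) {i j : ℕ}
    (hi : i < l.length) (hj : j < l.length) : r l[i] l[j] ↔ i < j := by
  have hpw := List.pairwise_iff_getElem.1 h.pairwise
  refine ⟨fun hr => ?_, hpw i j hi hj⟩
  rcases lt_trichotomy i j with hij | rfl | hji
  · exact hij
  · exact absurd hr (hirr _)
  · exact absurd (htrans _ _ _ hr (hpw j i hj hi hji)) (hirr _)

theorem SortedOf.mono {r' : α → α → Prop} {s : Finset α} {l : List α} (h : SortedOf r s l)
    (hrel : ∀ x ∈ s, ∀ y ∈ s, r x y → r' x y) : SortedOf r' s l :=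
  ⟨h.mem_iff, h.nodup, h.pairwise.imp_of_mem fun hx hy =>
    hrel _ ((h.mem_iff _).1 hx) _ ((h.mem_iff _).1 hy)⟩

end SortedOf

namespace List

variable {α : Type*}

theorem exists_map_eq_of_nodup [DecidableEq α] :
    ∀ {l₁ l₂ : List α}, l₁.Nodup → l₁.length = l₂.length → ∃ g : α → α, l₁.map g = l₂
  | [], [], _, _ => ⟨id, rfl⟩
  | a :: l₁, b :: l₂, hnd, hlen => by
    obtain ⟨g, hg⟩ := exists_map_eq_of_nodup (nodup_cons.1 hnd).2 (by simpa using hlen)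
    refine ⟨Function.update g a b, ?_⟩
    rw [map_cons, Function.update_self, map_congr_left fun x hx =>
      Function.update_of_ne (by rintro rfl; exact (nodup_cons.1 hnd).1 hx) b g, hg]

theorem exists_eq_append_or_isChain_not (r : α → α → Prop) :
    ∀ l : List α, (∃ u a b v, l = u ++ a :: b :: v ∧ r a b) ∨ l.IsChain fun a b => ¬ r a b
  | [] => Or.inr IsChain.nil
  | [a] => Or.inr (isChain_singleton a)
  | a :: b :: l => by
    by_cases hab : r a b
    · exact Or.inl ⟨[], a, b, l, rfl, hab⟩
    rcases exists_eq_append_or_isChain_not r (b :: l) with ⟨u, c, d, v, hl, hcd⟩ | hch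
    · exact Or.inl ⟨a :: u, c, d, v, by rw [hl, cons_append], hcd⟩
    · exact Or.inr (isChain_cons_cons.2 ⟨hab, hch⟩)

theorem IsChain.eq_singleton {r : α → α → Prop} :
    ∀ {l : List α} {x : α}, l.IsChain r → x ∈ l → (∀ y ∈ l, ¬ r x y ∧ ¬ r y x) → l = [x]
  | [a], _, _, hx, _ => by rw [mem_singleton.1 hx]
  | a :: b :: l, x, hch, hx, hr => by
    obtain ⟨hab, hch⟩ := isChain_cons_cons.1 hch
    rcases mem_cons.1 hx with rfl | hx
    · exact absurd hab (hr b (by simp)).1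
    · obtain ⟨rfl, -⟩ := cons_eq_cons.1 (hch.eq_singleton hx fun y hy => hr y (by simp [hy]))
      exact absurd hab (hr a (by simp)).2

end List

/-! ### Codes and their normal form -/

/-- The code of a discrete ipomset: its events in event order, each with its label, its source
flag and its target flag. -/
abbrev Code (A : Type v) := List (A × Bool × Bool)

namespace Code

variable {A : Type v}

def IsStarter (c : Code A) : Prop := ∀ e ∈ c, e.2.2 = true

def IsTerminator (c : Code A) : Prop := ∀ e ∈ c, e.2.1 = true

instance : DecidablePred (IsStarter (A := A)) := fun c =>
  inferInstanceAs (Decidable (∀ e ∈ c, e.2.2 = true))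

instance : DecidablePred (IsTerminator (A := A)) := fun c =>
  inferInstanceAs (Decidable (∀ e ∈ c, e.2.1 = true))

def labels (c : Code A) : List A := c.map (·.1)

def srcLabels (c : Code A) : List A := (c.filter (·.2.1)).map (·.1)

def tgtLabels (c : Code A) : List A := (c.filter (·.2.2)).map (·.1)

def Matches (p q : Code A) : Prop := tgtLabels p = srcLabels q

def dual (c : Code A) : Code A := c.map fun e => (e.1, e.2.2, e.2.1)

/-- Gluing of starters: the events of `q`, whose source flags are replaced, in order, by those
of `p`. -/
def glueS : Code A → Code A → Code A
  | [], q => q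
  | _ :: _, [] => []
  | f :: p, e :: q =>
    if e.2.1 then (e.1, f.2.1, e.2.2) :: glueS p q else e :: glueS (f :: p) q

/-- Gluing of terminators is the mirror image of gluing of starters. -/
def glueT (p q : Code A) : Code A := dual (glueS (dual q) (dual p))

@[simp] theorem isStarter_cons {e : A × Bool × Bool} {c : Code A} :
    IsStarter (e :: c) ↔ e.2.2 = true ∧ IsStarter c := by simp [IsStarter]

@[simp] theorem isTerminator_nil : IsTerminator ([] : Code A) := by simp [IsTerminator]

@[simp] theorem isTerminator_cons {e : A × Bool × Bool} {c : Code A} :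
    IsTerminator (e :: c) ↔ e.2.1 = true ∧ IsTerminator c := by simp [IsTerminator]

@[simp] theorem glueS_nil_left (q : Code A) : glueS [] q = q := by cases q <;> simp [glueS]

@[simp] theorem glueS_nil_right (p : Code A) : glueS p [] = [] := by cases p <;> rfl

theorem glueS_cons_cons (f e : A × Bool × Bool) (p q : Code A) :
    glueS (f :: p) (e :: q) =
      if e.2.1 then (e.1, f.2.1, e.2.2) :: glueS p q else e :: glueS (f :: p) q := by
  simp [glueS]

theorem glueS_cons_of_not_src (p : Code A) {e : A × Bool × Bool} (he : e.2.1 = false)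
    (q : Code A) : glueS p (e :: q) = e :: glueS p q := by
  cases p <;> simp [glueS_cons_cons, he]

@[simp] theorem dual_dual (c : Code A) : dual (dual c) = c := by simp [dual, Function.comp_def]

@[simp] theorem length_dual (c : Code A) : (dual c).length = c.length := by simp [dual]

@[simp] theorem labels_dual (c : Code A) : labels (dual c) = labels c := by
  simp [dual, labels, Function.comp_def]

@[simp] theorem srcLabels_dual (c : Code A) : srcLabels (dual c) = tgtLabels c := by
  simp [dual, srcLabels, tgtLabels, List.filter_map, Function.comp_def]

@[simp] theorem tgtLabels_dual (c : Code A) : tgtLabels (dual c) = srcLabels c := by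
  simp [dual, srcLabels, tgtLabels, List.filter_map, Function.comp_def]

@[simp] theorem isStarter_dual (c : Code A) : IsStarter (dual c) ↔ IsTerminator c := by
  simp only [dual, IsStarter, IsTerminator, List.forall_mem_map]

@[simp] theorem isTerminator_dual (c : Code A) : IsTerminator (dual c) ↔ IsStarter c := by
  simp only [dual, IsStarter, IsTerminator, List.forall_mem_map]

theorem tgtLabels_of_isStarter {c : Code A} (h : IsStarter c) : tgtLabels c = labels c := by
  rw [tgtLabels, List.filter_eq_self.2 h, labels]

theorem srcLabels_of_isTerminator {c : Code A} (h : IsTerminator c) :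
    srcLabels c = labels c := by
  rw [srcLabels, List.filter_eq_self.2 h, labels]

theorem length_srcLabels_le (c : Code A) : (srcLabels c).length ≤ c.length := by
  simpa [srcLabels] using List.length_filter_le _ c

theorem length_tgtLabels_le (c : Code A) : (tgtLabels c).length ≤ c.length := by
  simpa [tgtLabels] using List.length_filter_le _ c

theorem Matches.length_srcLabels_le {p q : Code A} (h : Matches p q) :
    (srcLabels q).length ≤ p.length :=
  h ▸ Code.length_tgtLabels_le p

theorem Matches.length_tgtLabels_le {p q : Code A} (h : Matches p q) :
    (tgtLabels p).length ≤ q.length :=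
  h.symm ▸ Code.length_srcLabels_le q

theorem Matches.length_srcLabels_eq {p q : Code A} (h : Matches p q) (hp : IsStarter p) :
    (srcLabels q).length = p.length := by
  rw [← h, tgtLabels_of_isStarter hp, labels, List.length_map]

theorem Matches.length_tgtLabels_eq {p q : Code A} (h : Matches p q) (hq : IsTerminator q) :
    (tgtLabels p).length = q.length := by
  rw [h, srcLabels_of_isTerminator hq, labels, List.length_map]

theorem Matches.labels_eq {p q : Code A} (h : Matches p q) (hp : IsStarter p)
    (hq : IsTerminator q) : labels p = labels q := by
  rw [← tgtLabels_of_isStarter hp, h, srcLabels_of_isTerminator hq]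

theorem map_glueS (p q : Code A) :
    (glueS p q).map (fun e => (e.1, e.2.2)) = q.map (fun e => (e.1, e.2.2)) := by
  induction q generalizing p with
  | nil => simp
  | cons e q ih =>
    cases p with
    | nil => rfl
    | cons f p => rw [glueS_cons_cons]; split <;> simp [ih]

@[simp] theorem isStarter_glueS (p q : Code A) : IsStarter (glueS p q) ↔ IsStarter q := by
  have h := congrArg (fun c => ∀ e ∈ c, e.2 = true) (map_glueS p q)
  simpa only [IsStarter, List.forall_mem_map, eq_iff_iff] using h

@[simp] theorem tgtLabels_glueS (p q : Code A) : tgtLabels (glueS p q) = tgtLabels q := by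
  have h := congrArg (fun c => (c.filter (·.2)).map (·.1)) (map_glueS p q)
  simpa [tgtLabels, List.filter_map, Function.comp_def] using h

theorem isTerminator_glueS {p q : Code A} (h : (srcLabels q).length = p.length) :
    IsTerminator (glueS p q) ↔ IsTerminator p ∧ IsTerminator q := by
  induction q generalizing p with
  | nil => cases p <;> simp_all [srcLabels]
  | cons e q ih =>
    cases p with
    | nil => simp
    | cons f p =>
      obtain ⟨a, s, t⟩ := e
      cases s <;> simp_all [glueS_cons_cons, srcLabels, and_assoc]

theorem glueS_of_isTerminator {p q : Code A} (hp : IsTerminator p)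
    (h : (srcLabels q).length ≤ p.length) : glueS p q = q := by
  induction q generalizing p with
  | nil => simp
  | cons e q ih =>
    cases p with
    | nil => rfl
    | cons f p =>
      obtain ⟨a, s, t⟩ := e
      simp only [isTerminator_cons] at hp
      cases s <;> simp_all [glueS_cons_cons, srcLabels]

theorem glueS_of_isIdentity {p q : Code A} (hp : IsStarter p) (hqs : IsStarter q)
    (hqt : IsTerminator q) (hl : labels p = labels q) : glueS p q = p := by
  induction q generalizing p with
  | nil => cases p <;> simp_all [labels]
  | cons e q ih =>
    cases p with
    | nil => simp [labels] at hl
    | cons f p =>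
      obtain ⟨a, s, t⟩ := e
      obtain ⟨b, s', t'⟩ := f
      simp only [isStarter_cons, isTerminator_cons, labels, List.map_cons,
        List.cons.injEq] at hp hqs hqt hl
      simp_all [glueS_cons_cons, labels]

theorem glueS_assoc (x : Code A) {p q : Code A} (h : (srcLabels q).length ≤ p.length) :
    glueS (glueS x p) q = glueS x (glueS p q) := by
  induction q generalizing x p with
  | nil => simp
  | cons e q ih =>
    obtain ⟨a, s, t⟩ := e
    cases s with
    | false =>
      simp only [glueS_cons_of_not_src _ (e := (a, false, t)) rfl]
      exact congrArg _ (ih x (by simpa [srcLabels] using h))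
    | true =>
      cases p with
      | nil => simp [srcLabels] at h
      | cons f p =>
        obtain ⟨b, s', t'⟩ := f
        have h' : (srcLabels q).length ≤ p.length := by simpa [srcLabels] using h
        cases x with
        | nil => simp [glueS_cons_cons]
        | cons g x => cases s' <;> simp_all [glueS_cons_cons]

theorem srcLabels_glueS {p q : Code A} (h : labels p = srcLabels q) :
    srcLabels (glueS p q) = srcLabels p := by
  induction q generalizing p with
  | nil => cases p <;> simp_all [labels, srcLabels]
  | cons e q ih =>
    obtain ⟨a, s, t⟩ := e
    cases p with
    | nil => simp_all [labels, srcLabels]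
    | cons f p =>
      obtain ⟨b, s', t'⟩ := f
      cases s <;> cases s' <;> simp_all [glueS_cons_cons, labels, srcLabels]

@[simp] theorem isTerminator_glueT (p q : Code A) :
    IsTerminator (glueT p q) ↔ IsTerminator p := by
  simp [glueT]

theorem isStarter_glueT {p q : Code A} (h : (tgtLabels p).length = q.length) :
    IsStarter (glueT p q) ↔ IsStarter p ∧ IsStarter q := by
  rw [glueT, isStarter_dual, isTerminator_glueS (by simpa using h), isTerminator_dual,
    isTerminator_dual, and_comm]

theorem glueT_of_isStarter {p q : Code A} (hq : IsStarter q)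
    (h : (tgtLabels p).length ≤ q.length) : glueT p q = p := by
  rw [glueT, glueS_of_isTerminator (by simpa using hq) (by simpa using h), dual_dual]

theorem glueT_of_isIdentity {p q : Code A} (hps : IsStarter p) (hpt : IsTerminator p)
    (hq : IsTerminator q) (hl : labels p = labels q) : glueT p q = q := by
  rw [glueT, glueS_of_isIdentity (by simpa using hq) (by simpa using hpt) (by simpa using hps)
    (by simpa using hl.symm), dual_dual]

theorem glueT_assoc {x p : Code A} (q : Code A) (h : (tgtLabels x).length ≤ p.length) :
    glueT (glueT x p) q = glueT x (glueT p q) := by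
  simp only [glueT, dual_dual]
  rw [glueS_assoc _ (by simpa using h)]

theorem tgtLabels_glueT {p q : Code A} (h : tgtLabels p = labels q) :
    tgtLabels (glueT p q) = tgtLabels q := by
  rw [glueT, tgtLabels_dual, srcLabels_glueS (by simpa using h.symm), srcLabels_dual]

theorem glueS_map_filter {α : Type*} (l : List α) (lab lab' : α → A) (s t s' t' : α → Bool)
    (h : ∀ x ∈ l, s' x = false → s x = false) :
    glueS ((l.filter s').map fun x => (lab' x, s x, t x)) (l.map fun x => (lab x, s' x, t' x)) =
      l.map fun x => (lab x, s x, t' x) := by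
  induction l with
  | nil => simp
  | cons x l ih =>
    have ih := ih fun y hy => h y (List.mem_cons_of_mem x hy)
    cases hx : s' x
    · rw [List.filter_cons_of_neg (by simp [hx]), List.map_cons,
        glueS_cons_of_not_src _ (by exact hx), ih, List.map_cons, h x (by simp) hx, ← hx]
    · rw [List.filter_cons_of_pos hx]
      simp [glueS_cons_cons, hx, ih]

theorem glueT_map_filter {α : Type*} (l : List α) (lab lab' : α → A) (s t s' t' : α → Bool)
    (h : ∀ x ∈ l, t x = false → t' x = false) :
    glueT (l.map fun x => (lab x, s x, t x)) ((l.filter t).map fun x => (lab' x, s' x, t' x)) =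
      l.map fun x => (lab x, s x, t' x) := by
  have := glueS_map_filter l lab lab' t' s' t s h
  simp only [glueT, dual, List.map_map, Function.comp_def] at this ⊢
  rw [this, List.map_map]
  rfl

def Coherent (w : List (Code A)) : Prop :=
  (∀ c ∈ w, IsStarter c ∨ IsTerminator c) ∧ w.IsChain Matches

theorem Coherent.of_cons_cons {x y z : Code A} {w : List (Code A)} (h : Coherent (x :: z :: w))
    (hy : IsStarter y ∨ IsTerminator y) (hyz : tgtLabels y = tgtLabels z) :
    Coherent (y :: w) := by
  obtain ⟨hmem, hch⟩ := h
  refine ⟨fun c hc => ?_, ?_⟩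
  · rcases List.mem_cons.1 hc with rfl | hc
    exacts [hy, hmem c (by simp [hc])]
  · exact (List.isChain_cons_cons.1 hch).2.imp_head (y := y) fun h => hyz.trans h

/-- The accumulator is the normal form built so far, in reverse order; a letter of the same type
as the last one is glued onto it. -/
def push : List (Code A) → Code A → List (Code A)
  | [], p => [p]
  | x :: acc, p =>
    if IsStarter x ∧ IsStarter p then glueS x p :: acc
    else if IsTerminator x ∧ IsTerminator p then glueT x p :: acc
    else p :: x :: acc

def normalForm : List (Code A) → List (Code A)
  | [] => []
  | p :: w => (w.foldl push [p]).reverse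

theorem push_cons_of_isIdentity {x p : Code A} (acc : List (Code A))
    (hx : IsStarter x ∨ IsTerminator x) (hxp : Matches x p) (hps : IsStarter p)
    (hpt : IsTerminator p) : push (x :: acc) p = x :: acc := by
  by_cases hxs : IsStarter x
  · rw [push, if_pos ⟨hxs, hps⟩, glueS_of_isIdentity hxs hps hpt (hxp.labels_eq hxs hpt)]
  · rw [push, if_neg (fun h => hxs h.1), if_pos ⟨hx.resolve_left hxs, hpt⟩,
      glueT_of_isStarter hps hxp.length_tgtLabels_le]

theorem push_singleton_of_isIdentity {p q : Code A} (hps : IsStarter p) (hpt : IsTerminator p)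
    (hq : IsStarter q ∨ IsTerminator q) (hpq : Matches p q) : push [p] q = [q] := by
  by_cases hqs : IsStarter q
  · rw [push, if_pos ⟨hps, hqs⟩, glueS_of_isTerminator hpt hpq.length_srcLabels_le]
  · have hqt := hq.resolve_left hqs
    rw [push, if_neg (fun h => hqs h.2), if_pos ⟨hpt, hqt⟩,
      glueT_of_isIdentity hps hpt hqt (hpq.labels_eq hps hqt)]

theorem push_push_of_isStarter {x p q : Code A} (acc : List (Code A)) (hxp : Matches x p)
    (hpq : Matches p q) (hp : IsStarter p) (hq : IsStarter q) :
    push (push (x :: acc) p) q = push (x :: acc) (glueS p q) := by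
  by_cases hxs : IsStarter x
  · simp only [push, isStarter_glueS, hxs, hp, hq, and_self, if_true,
      glueS_assoc x hpq.length_srcLabels_le]
  by_cases hxpt : IsTerminator x ∧ IsTerminator p
  · -- `p` is an identity
    rw [push_cons_of_isIdentity acc (Or.inr hxpt.1) hxp hp hxpt.2,
      glueS_of_isTerminator hxpt.2 hpq.length_srcLabels_le]
  · have hpq' := isTerminator_glueS (hpq.length_srcLabels_eq hp)
    simp only [push, hxs, hp, hq, false_and, if_false, hxpt, and_self, if_true, hpq',
      isStarter_glueS]
    rw [if_neg (fun h => hxpt ⟨h.1, h.2.1⟩)]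

theorem push_push_of_isTerminator {x p q : Code A} (acc : List (Code A)) (hxp : Matches x p)
    (hpq : Matches p q) (hp : IsTerminator p) (hq : IsTerminator q) :
    push (push (x :: acc) p) q = push (x :: acc) (glueT p q) := by
  by_cases hxps : IsStarter x ∧ IsStarter p
  · -- `p` is an identity
    rw [push_cons_of_isIdentity acc (Or.inl hxps.1) hxp hxps.2 hp,
      glueT_of_isIdentity hxps.2 hp hq (hpq.labels_eq hxps.2 hq)]
  have hxp' := isStarter_glueT (hxp.length_tgtLabels_eq hp)
  have hpq' := isStarter_glueT (hpq.length_tgtLabels_eq hq)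
  by_cases hxt : IsTerminator x
  · have e₁ : push (x :: acc) p = glueT x p :: acc := by
      rw [push, if_neg hxps, if_pos ⟨hxt, hp⟩]
    have e₂ : push (glueT x p :: acc) q = glueT (glueT x p) q :: acc := by
      rw [push, if_neg fun h => hxps (hxp'.1 h.1), if_pos ⟨(isTerminator_glueT x p).2 hxt, hq⟩]
    have e₃ : push (x :: acc) (glueT p q) = glueT x (glueT p q) :: acc := by
      rw [push, if_neg fun h => hxps ⟨h.1, (hpq'.1 h.2).1⟩,
        if_pos ⟨hxt, (isTerminator_glueT p q).2 hp⟩]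
    rw [e₁, e₂, e₃, glueT_assoc q hxp.length_tgtLabels_le]
  · have e₁ : push (x :: acc) p = p :: x :: acc := by
      rw [push, if_neg hxps, if_neg fun h => hxt h.1]
    have e₂ : push (x :: acc) (glueT p q) = glueT p q :: x :: acc := by
      rw [push, if_neg fun h => hxps ⟨h.1, (hpq'.1 h.2).1⟩, if_neg fun h => hxt h.1]
    rw [e₁, e₂]
    by_cases hpqs : IsStarter p ∧ IsStarter q
    · rw [push, if_pos hpqs, glueS_of_isTerminator hp hpq.length_srcLabels_le,
        glueT_of_isIdentity hpqs.1 hp hq (hpq.labels_eq hpqs.1 hq)]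
    · rw [push, if_neg hpqs, if_pos ⟨hp, hq⟩]

theorem push_cons_eq_cons {x p : Code A} (acc : List (Code A))
    (hp : IsStarter p ∨ IsTerminator p) (hxp : Matches x p) :
    ∃ y acc', push (x :: acc) p = y :: acc' ∧ (IsStarter y ∨ IsTerminator y) ∧
      tgtLabels y = tgtLabels p := by
  rw [push]
  split_ifs with hS hT
  · exact ⟨_, _, rfl, Or.inl ((isStarter_glueS x p).2 hS.2), tgtLabels_glueS x p⟩
  · exact ⟨_, _, rfl, Or.inr ((isTerminator_glueT x p).2 hT.1),
      tgtLabels_glueT (hxp.trans (srcLabels_of_isTerminator hT.2))⟩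
  · exact ⟨_, _, rfl, hp, rfl⟩

theorem foldl_push_eq_cons : ∀ {u : List (Code A)} {x p : Code A} {w : List (Code A)}
    (acc : List (Code A)), Coherent (x :: (u ++ p :: w)) →
    ∃ y acc', u.foldl push (x :: acc) = y :: acc' ∧ Coherent (y :: p :: w)
  | [], _, _, _, acc, h => ⟨_, acc, rfl, h⟩
  | z :: u, x, p, w, acc, h => by
    obtain ⟨y, acc', hpush, hy, hyz⟩ :=
      push_cons_eq_cons acc (h.1 z (by simp)) (List.isChain_cons_cons.1 h.2).1
    rw [List.foldl_cons, hpush]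
    exact foldl_push_eq_cons acc' (h.of_cons_cons hy hyz)

theorem normalForm_congr {u v : List (Code A)} {p q r : Code A}
    (h : Coherent (u ++ p :: q :: v)) (hbase : push [p] q = [r])
    (hstep : ∀ x acc, Matches x p → push (push (x :: acc) p) q = push (x :: acc) r) :
    normalForm (u ++ p :: q :: v) = normalForm (u ++ r :: v) := by
  cases u with
  | nil => simp [normalForm, hbase]
  | cons x u =>
    obtain ⟨y, acc, hfold, hy⟩ := foldl_push_eq_cons (w := q :: v) [] h
    simp only [List.cons_append, normalForm, List.foldl_append, hfold, List.foldl_cons,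
      hstep y acc (List.isChain_cons_cons.1 hy.2).1]

theorem normalForm_glueS {u v : List (Code A)} {p q : Code A}
    (h : Coherent (u ++ p :: q :: v)) (hp : IsStarter p) (hq : IsStarter q) :
    normalForm (u ++ p :: q :: v) = normalForm (u ++ glueS p q :: v) := by
  have hpq : Matches p q :=
    (List.isChain_cons_cons.1 (List.isChain_append.1 h.2).2.1).1
  exact normalForm_congr h (by rw [push, if_pos ⟨hp, hq⟩])
    fun x acc hxp => push_push_of_isStarter acc hxp hpq hp hq

theorem normalForm_glueT {u v : List (Code A)} {p q : Code A}
    (h : Coherent (u ++ p :: q :: v)) (hp : IsTerminator p) (hq : IsTerminator q) :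
    normalForm (u ++ p :: q :: v) = normalForm (u ++ glueT p q :: v) := by
  have hpq : Matches p q :=
    (List.isChain_cons_cons.1 (List.isChain_append.1 h.2).2.1).1
  refine normalForm_congr h ?_ fun x acc hxp => push_push_of_isTerminator acc hxp hpq hp hq
  by_cases hpqs : IsStarter p ∧ IsStarter q
  · rw [push, if_pos hpqs, glueS_of_isTerminator hp hpq.length_srcLabels_le,
      glueT_of_isIdentity hpqs.1 hp hq (hpq.labels_eq hpqs.1 hq)]
  · rw [push, if_neg hpqs, if_pos ⟨hp, hq⟩]

theorem normalForm_erase_isIdentity {u v : List (Code A)} {p : Code A}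
    (h : Coherent (u ++ p :: v)) (hps : IsStarter p) (hpt : IsTerminator p)
    (hne : u ++ v ≠ []) : normalForm (u ++ p :: v) = normalForm (u ++ v) := by
  cases u with
  | nil =>
    obtain ⟨q, v, rfl⟩ := List.exists_cons_of_ne_nil hne
    have hpq : Matches p q := (List.isChain_cons_cons.1 h.2).1
    simp [normalForm, push_singleton_of_isIdentity hps hpt (h.1 q (by simp)) hpq]
  | cons x u =>
    obtain ⟨y, acc, hfold, hy⟩ := foldl_push_eq_cons (w := v) [] h
    have hyp : Matches y p := (List.isChain_cons_cons.1 hy.2).1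
    simp only [List.cons_append, normalForm, List.foldl_append, hfold, List.foldl_cons,
      push_cons_of_isIdentity acc (hy.1 y (by simp)) hyp hps hpt]

theorem normalForm_of_isChain {w : List (Code A)}
    (h : w.IsChain fun p q => ¬ (IsStarter p ∧ IsStarter q) ∧ ¬ (IsTerminator p ∧ IsTerminator q)) :
    normalForm w = w := by
  have key : ∀ {w : List (Code A)} {x : Code A} (acc : List (Code A)),
      (x :: w).IsChain (fun p q => ¬ (IsStarter p ∧ IsStarter q) ∧
        ¬ (IsTerminator p ∧ IsTerminator q)) →
      w.foldl push (x :: acc) = w.reverse ++ x :: acc := by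
    intro w
    induction w with
    | nil => intro _ _ _; rfl
    | cons z w ih =>
      intro x acc hch
      obtain ⟨⟨hS, hT⟩, hch⟩ := List.isChain_cons_cons.1 hch
      rw [List.foldl_cons, push, if_neg hS, if_neg hT, ih _ hch]
      simp
  cases w with
  | nil => rfl
  | cons x w => simp [normalForm, key [] h]

end Code

/-! ### Codes of discrete ipomsets and of their gluings -/

namespace Ipomset

theorem Discrete.evord_total {P : Ipomset E A} (hP : P.Discrete) {x y : E} (hx : x ∈ P.events)
    (hy : y ∈ P.events) (hxy : x ≠ y) : P.evord x y ∨ P.evord y x := by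
  rcases P.order_total hx hy hxy with h | h | h
  exacts [absurd h (hP x y), absurd h (hP y x), h]

open Classical in
/-- The events of `P` in event order; `[]` if that order is not total (it is when `P` is
discrete). -/
noncomputable def sortedEvents (P : Ipomset E A) : List E :=
  if h : ∃ l, SortedOf P.evord P.events l then h.choose else []

theorem Discrete.sortedOf_sortedEvents {P : Ipomset E A} (hP : P.Discrete) :
    SortedOf P.evord P.events P.sortedEvents := by
  have h := exists_sortedOf (r := P.evord) (fun _ _ _ => P.evord_trans) P.evord_irrefl P.events
    fun _ hx _ hy hxy => hP.evord_total hx hy hxy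
  rw [sortedEvents, dif_pos h]
  exact h.choose_spec

theorem Discrete.sortedEvents_eq {P : Ipomset E A} (hP : P.Discrete) {l : List E}
    (h : SortedOf P.evord P.events l) : P.sortedEvents = l :=
  hP.sortedOf_sortedEvents.eq h (fun _ _ _ => P.evord_trans) P.evord_irrefl

theorem Discrete.mem_sortedEvents {P : Ipomset E A} (hP : P.Discrete) {x : E} :
    x ∈ P.sortedEvents ↔ x ∈ P.events :=
  hP.sortedOf_sortedEvents.mem_iff x

variable [DecidableEq E]

noncomputable def code (P : Ipomset E A) : Code A :=
  P.sortedEvents.map fun x => (P.lab x, decide (x ∈ P.src), decide (x ∈ P.tgt))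

theorem Discrete.isStarter_code {P : Ipomset E A} (hP : P.Discrete) :
    P.code.IsStarter ↔ P.Starter := by
  simp only [Code.IsStarter, code, List.forall_mem_map, decide_eq_true_eq, hP.mem_sortedEvents,
    Starter, hP, true_and]
  exact ⟨fun h => Finset.Subset.antisymm P.tgt_sub h, fun h => h.symm.subset⟩

theorem Discrete.isTerminator_code {P : Ipomset E A} (hP : P.Discrete) :
    P.code.IsTerminator ↔ P.Terminator := by
  simp only [Code.IsTerminator, code, List.forall_mem_map, decide_eq_true_eq,
    hP.mem_sortedEvents, Terminator, hP, true_and]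
  exact ⟨fun h => Finset.Subset.antisymm P.src_sub h, fun h => h.symm.subset⟩

theorem srcLabels_code (P : Ipomset E A) :
    P.code.srcLabels = (P.sortedEvents.filter (· ∈ P.src)).map P.lab := by
  simp [Code.srcLabels, code, List.filter_map, Function.comp_def]

theorem tgtLabels_code (P : Ipomset E A) :
    P.code.tgtLabels = (P.sortedEvents.filter (· ∈ P.tgt)).map P.lab := by
  simp [Code.tgtLabels, code, List.filter_map, Function.comp_def]

end Ipomset

theorem IpoIso.discrete {P Q : Ipomset E A} (h : IpoIso P Q) (hP : P.Discrete) :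
    Q.Discrete := by
  obtain ⟨f, hf⟩ := h
  intro x y hxy
  obtain ⟨hx, hy⟩ := Q.lt_mem hxy
  obtain ⟨a, ha, rfl⟩ := hf.surj x hx
  obtain ⟨b, hb, rfl⟩ := hf.surj y hy
  exact hP a b ((hf.lt_iff a ha b hb).1 hxy)

theorem IpoIso.discrete_iff {P Q : Ipomset E A} (h : IpoIso P Q) :
    P.Discrete ↔ Q.Discrete := by
  refine ⟨h.discrete, fun hQ x y hxy => ?_⟩
  obtain ⟨f, hf⟩ := h
  obtain ⟨hx, hy⟩ := P.lt_mem hxy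
  exact hQ _ _ ((hf.lt_iff x hx y hy).2 hxy)

theorem IpoIso.code_eq [DecidableEq E] {P Q : Ipomset E A} (h : IpoIso P Q)
    (hP : P.Discrete) : Q.code = P.code := by
  have hQ := h.discrete hP
  obtain ⟨f, hf⟩ := h
  have hsorted := hP.sortedOf_sortedEvents.map f hf.maps hf.inj hf.surj
    fun x hx y hy => (hf.evord_iff x hx y hy (hP x y) (hP y x)).1
  rw [Ipomset.code, hQ.sortedEvents_eq hsorted, List.map_map, Ipomset.code]
  refine List.map_congr_left fun x hx => ?_
  have hx := hP.mem_sortedEvents.1 hx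
  simp [hf.lab_eq x hx, ← hf.src_iff x hx, ← hf.tgt_iff x hx]

theorem ipoIso_of_code_eq [DecidableEq E] {P Q : Ipomset E A} (hP : P.Discrete)
    (hQ : Q.Discrete) (h : P.code = Q.code) : IpoIso P Q := by
  have sP := hP.sortedOf_sortedEvents
  have sQ := hQ.sortedOf_sortedEvents
  obtain ⟨g, hg⟩ := List.exists_map_eq_of_nodup (l₂ := Q.sortedEvents) sP.nodup
    (by simpa [Ipomset.code] using congrArg List.length h)
  have hdata : ∀ x ∈ P.events, (Q.lab (g x), decide (g x ∈ Q.src), decide (g x ∈ Q.tgt)) =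
      (P.lab x, decide (x ∈ P.src), decide (x ∈ P.tgt)) := by
    rw [Ipomset.code, Ipomset.code, ← hg, List.map_map] at h
    exact fun x hx => (List.map_inj_left.1 h x (hP.mem_sortedEvents.2 hx)).symm
  have hget : ∀ i (hi : i < P.sortedEvents.length),
      g P.sortedEvents[i] = Q.sortedEvents[i]'(by simpa [← hg] using hi) := by
    intro i hi
    simp [← hg]
  refine ⟨g, ⟨fun x hx => ?_, fun x hx y hy => ?_, fun y hy => ?_, fun x hx => ?_,
    fun x hx => ?_, fun x hx => ?_, fun x _ y _ => ⟨fun h => absurd h (hQ _ _),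
    fun h => absurd h (hP _ _)⟩, fun x hx y hy _ _ => ?_⟩⟩
  · exact (sQ.mem_iff _).1 (hg ▸ List.mem_map_of_mem ((sP.mem_iff x).2 hx))
  · exact List.inj_on_of_nodup_map (hg ▸ sQ.nodup) ((sP.mem_iff x).2 hx) ((sP.mem_iff y).2 hy)
  · obtain ⟨x, hx, rfl⟩ := List.mem_map.1 (hg ▸ (sQ.mem_iff y).2 hy)
    exact ⟨x, (sP.mem_iff x).1 hx, rfl⟩
  · simpa using (congrArg (·.2.1) (hdata x hx)).symm
  · simpa using (congrArg (·.2.2) (hdata x hx)).symm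
  · exact congrArg (·.1) (hdata x hx)
  · obtain ⟨i, hi, rfl⟩ := List.getElem_of_mem ((sP.mem_iff x).2 hx)
    obtain ⟨j, hj, rfl⟩ := List.getElem_of_mem ((sP.mem_iff y).2 hy)
    rw [hget i hi, hget j hj, sP.rel_getElem_iff (fun _ _ _ => P.evord_trans) P.evord_irrefl,
      sQ.rel_getElem_iff (fun _ _ _ => Q.evord_trans) Q.evord_irrefl]

section Gluing

theorem not_glueLt {P Q : Ipomset E A} (hP : P.Discrete) (hQ : Q.Discrete)
    (hPQ : ∀ x ∈ P.events, ∀ y ∈ Q.events, x ∈ P.tgt ∨ y ∈ Q.src) (x y : E) :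
    ¬ glueLt P Q x y := by
  have hstep : ∀ x y, ¬ glueStep P Q x y := by
    rintro x y (hxy | hxy | ⟨hx, hxt, hy, hys⟩)
    exacts [hP x y hxy, hQ x y hxy, (hPQ x hx y hy).elim hxt hys]
  intro h
  induction h with
  | single hs => exact hstep _ _ hs
  | tail _ hs => exact hstep _ _ hs

variable [DecidableEq E]

theorem Ipomset.Discrete.matches_code {P Q : Ipomset E A} (hP : P.Discrete) (hQ : Q.Discrete)
    (h : ClIso P.tgtIface Q.srcIface) : Code.Matches P.code Q.code := by
  obtain ⟨f, hf⟩ := h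
  have sT := hP.sortedOf_sortedEvents.filter (r' := P.tgtIface.evord) P.tgt_sub
    fun x hx y hy h => ⟨hx, hy, h⟩
  have sS := hQ.sortedOf_sortedEvents.filter (r' := Q.srcIface.evord) Q.src_sub
    fun x hx y hy h => ⟨hx, hy, h⟩
  have hmap := (sT.map f hf.maps hf.inj hf.surj fun x hx y hy => (hf.evord_iff x hx y hy).1).eq
    sS (fun _ _ _ => Q.srcIface.evord_trans) Q.srcIface.evord_irrefl
  rw [Code.Matches, Ipomset.tgtLabels_code, Ipomset.srcLabels_code, ← hmap, List.map_map]
  refine List.map_congr_left fun x hx => ?_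
  have hx : x ∈ P.tgt := (sT.mem_iff x).1 hx
  have := hf.lab_eq x hx
  simp only [Ipomset.srcIface, Ipomset.tgtIface, if_pos hx,
    if_pos (show f x ∈ Q.src from hf.maps x hx)] at this
  exact (Option.some.inj this).symm

namespace IsGlueOf

variable {P Q R : Ipomset E A}

theorem discrete (h : IsGlueOf P Q R) (hP : P.Discrete) (hQ : Q.Discrete)
    (hPQ : ∀ x ∈ P.events, ∀ y ∈ Q.events, x ∈ P.tgt ∨ y ∈ Q.src) : R.Discrete :=
  fun x y hxy => not_glueLt hP hQ hPQ x y ((h.2.2.1 x y).1 hxy)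

theorem tgt_eq_src (h : IsGlueOf P Q R) : P.tgt = Q.src :=
  congrArg Conclist.events h.1.1

theorem evord_iff_of_mem_tgt (h : IsGlueOf P Q R) {x y : E} (hx : x ∈ P.tgt) (hy : y ∈ P.tgt) :
    P.evord x y ↔ Q.evord x y := by
  have := congrFun (congrFun (congrArg Conclist.evord h.1.1) x) y
  simp only [Ipomset.srcIface, Ipomset.tgtIface, eq_iff_iff] at this
  rw [h.tgt_eq_src] at hx hy
  simpa [hx, hy, h.tgt_eq_src] using this

theorem code_of_starter (h : IsGlueOf P Q R) (hP : P.Starter) (hQ : Q.Starter) :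
    R.code = Code.glueS P.code Q.code := by
  obtain ⟨-, hev, -, hevo, hsrc, htgt, -, hlabQ⟩ := id h
  have hPQ : P.events = Q.src := hP.2 ▸ h.tgt_eq_src
  have hR : R.Discrete := h.discrete hP.1 hQ.1 fun x hx _ _ => Or.inl (hP.2 ▸ hx)
  have sQ := hQ.1.sortedOf_sortedEvents
  have hsortR : R.sortedEvents = Q.sortedEvents := by
    refine hR.sortedEvents_eq ?_
    rw [hev, hPQ, Finset.union_eq_right.2 Q.src_sub]
    exact sQ.mono fun x _ y _ hxy => (hevo x y).2 (Or.inr hxy)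
  have hsortP : P.sortedEvents = Q.sortedEvents.filter (· ∈ Q.src) := by
    refine hP.1.sortedEvents_eq ?_
    rw [hPQ]
    exact sQ.filter Q.src_sub fun x hx y hy hxy =>
      (h.evord_iff_of_mem_tgt (h.tgt_eq_src ▸ hx) (h.tgt_eq_src ▸ hy)).2 hxy
  calc R.code
      = Q.sortedEvents.map fun x => (Q.lab x, decide (x ∈ P.src), decide (x ∈ Q.tgt)) := by
        rw [Ipomset.code, hsortR]
        exact List.map_congr_left fun x hx => by
          simp [hlabQ x ((sQ.mem_iff x).1 hx), hsrc, htgt]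
    _ = Code.glueS ((Q.sortedEvents.filter (· ∈ Q.src)).map
          fun x => (P.lab x, decide (x ∈ P.src), decide (x ∈ P.tgt))) Q.code := by
        refine (Code.glueS_map_filter _ _ _ _ _ _ _ fun x _ hx => ?_).symm
        simpa [← hPQ] using fun hxs => of_decide_eq_false hx (hPQ ▸ P.src_sub hxs)
    _ = Code.glueS P.code Q.code := by simp only [Ipomset.code, hsortP]

theorem code_of_terminator (h : IsGlueOf P Q R) (hP : P.Terminator) (hQ : Q.Terminator) :
    R.code = Code.glueT P.code Q.code := by
  obtain ⟨-, hev, -, hevo, hsrc, htgt, hlabP, -⟩ := id h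
  have hQP : Q.events = P.tgt := hQ.2 ▸ h.tgt_eq_src.symm
  have hR : R.Discrete := h.discrete hP.1 hQ.1 fun _ _ y hy => Or.inr (hQ.2 ▸ hy)
  have sP := hP.1.sortedOf_sortedEvents
  have hsortR : R.sortedEvents = P.sortedEvents := by
    refine hR.sortedEvents_eq ?_
    rw [hev, hQP, Finset.union_eq_left.2 P.tgt_sub]
    exact sP.mono fun x _ y _ hxy => (hevo x y).2 (Or.inl hxy)
  have hsortQ : Q.sortedEvents = P.sortedEvents.filter (· ∈ P.tgt) := by
    refine hQ.1.sortedEvents_eq ?_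
    rw [hQP]
    exact sP.filter P.tgt_sub fun x hx y hy hxy => (h.evord_iff_of_mem_tgt hx hy).1 hxy
  calc R.code
      = P.sortedEvents.map fun x => (P.lab x, decide (x ∈ P.src), decide (x ∈ Q.tgt)) := by
        rw [Ipomset.code, hsortR]
        exact List.map_congr_left fun x hx => by
          simp [hlabP x ((sP.mem_iff x).1 hx), hsrc, htgt]
    _ = Code.glueT P.code ((P.sortedEvents.filter (· ∈ P.tgt)).map
          fun x => (Q.lab x, decide (x ∈ Q.src), decide (x ∈ Q.tgt))) := by
        refine (Code.glueT_map_filter _ _ _ _ _ _ _ fun x _ hx => ?_).symm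
        simpa using fun hxt => of_decide_eq_false hx (hQP ▸ Q.tgt_sub hxt)
    _ = Code.glueT P.code Q.code := by simp only [Ipomset.code, hsortQ]

end IsGlueOf

theorem IpoIso.starter {P Q : Ipomset E A} (h : IpoIso P Q) (hP : P.Starter) : Q.Starter :=
  (h.discrete hP.1).isStarter_code.1 (h.code_eq hP.1 ▸ hP.1.isStarter_code.2 hP)

theorem IpoIso.terminator {P Q : Ipomset E A} (h : IpoIso P Q) (hP : P.Terminator) :
    Q.Terminator :=
  (h.discrete hP.1).isTerminator_code.1 (h.code_eq hP.1 ▸ hP.1.isTerminator_code.2 hP)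

namespace IsGluing

variable {P Q R : Ipomset E A}

theorem code_of_starter (h : IsGluing P Q R) (hP : P.Starter) (hQ : Q.Starter) :
    R.code = Code.glueS P.code Q.code := by
  obtain ⟨P', Q', R', hPP, hQQ, hRR, hG⟩ := h
  have hR' : R'.Discrete := hG.discrete (hPP.starter hP).1 (hQQ.starter hQ).1
    fun x hx _ _ => Or.inl ((hPP.starter hP).2 ▸ hx)
  rw [← hRR.code_eq (hRR.discrete_iff.2 hR'),
    hG.code_of_starter (hPP.starter hP) (hQQ.starter hQ), hPP.code_eq hP.1, hQQ.code_eq hQ.1]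

theorem code_of_terminator (h : IsGluing P Q R) (hP : P.Terminator) (hQ : Q.Terminator) :
    R.code = Code.glueT P.code Q.code := by
  obtain ⟨P', Q', R', hPP, hQQ, hRR, hG⟩ := h
  have hR' : R'.Discrete := hG.discrete (hPP.terminator hP).1 (hQQ.terminator hQ).1
    fun _ _ y hy => Or.inr ((hQQ.terminator hQ).2 ▸ hy)
  rw [← hRR.code_eq (hRR.discrete_iff.2 hR'),
    hG.code_of_terminator (hPP.terminator hP) (hQQ.terminator hQ),
    hPP.code_eq hP.1, hQQ.code_eq hQ.1]

end IsGluing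

end Gluing

/-! ### Uniqueness of the sparse representative -/

section NormalForm

theorem StepLetter.discrete {P : Ipomset E A} (h : StepLetter P) : P.Discrete :=
  h.elim And.left And.left

variable [DecidableEq E]

theorem StepLetter.code {P : Ipomset E A} (h : StepLetter P) :
    P.code.IsStarter ∨ P.code.IsTerminator :=
  h.imp h.discrete.isStarter_code.2 h.discrete.isTerminator_code.2

theorem Coherent.code {w : List (Ipomset E A)} (h : Coherent w) :
    Code.Coherent (w.map Ipomset.code) := by
  refine ⟨by simpa using fun P hP => (h.1 P hP).code, List.isChain_map _ |>.2 ?_⟩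
  exact h.2.imp_of_mem_imp fun P Q hP hQ hPQ =>
    (h.1 P hP).discrete.matches_code (h.1 Q hQ).discrete hPQ

theorem StepEquiv.normalForm_map_code {w₁ w₂ : List (Ipomset E A)} (h : StepEquiv w₁ w₂) :
    Code.normalForm (w₁.map Ipomset.code) = Code.normalForm (w₂.map Ipomset.code) := by
  induction h with
  | glue u v P Q R hco htype hglue =>
    have hc := hco.code
    simp only [List.map_append, List.map_cons] at hc ⊢
    rcases htype with ⟨hP, hQ⟩ | ⟨hP, hQ⟩
    · rw [hglue.code_of_starter hP hQ]
      exact Code.normalForm_glueS hc (hP.1.isStarter_code.2 hP) (hQ.1.isStarter_code.2 hQ)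
    · rw [hglue.code_of_terminator hP hQ]
      exact Code.normalForm_glueT hc (hP.1.isTerminator_code.2 hP)
        (hQ.1.isTerminator_code.2 hQ)
  | ident u v P hco hid hne =>
    have hc := hco.code
    simp only [List.map_append, List.map_cons] at hc ⊢
    exact Code.normalForm_erase_isIdentity hc (hid.1.isStarter_code.2 ⟨hid.1, hid.2.2⟩)
      (hid.1.isTerminator_code.2 ⟨hid.1, hid.2.1⟩) (by simpa using hne)
  | iso u v P Q hco hiso =>
    simp only [List.map_append, List.map_cons,
      hiso.code_eq (hco.1 P (by simp)).discrete]
  | refl => rfl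
  | symm _ ih => exact ih.symm
  | trans _ _ ih₁ ih₂ => exact ih₁.trans ih₂

theorem SparseWord.normalForm_map_code {s : List (Ipomset E A)} (hs : SparseWord s) :
    Code.normalForm (s.map Ipomset.code) = s.map Ipomset.code := by
  rcases hs with ⟨P, rfl, -⟩ | ⟨hmem, hch⟩
  · rfl
  refine Code.normalForm_of_isChain (List.isChain_map _ |>.2 ?_)
  refine hch.imp_of_mem_imp fun P Q hP hQ hPQ => ?_
  have hcode : ∀ X ∈ s, (X.code.IsStarter ↔ X.Starter) ∧ (X.code.IsTerminator ↔ X.Terminator) :=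
    fun X hX => ⟨(hmem X hX).1.discrete.isStarter_code, (hmem X hX).1.discrete.isTerminator_code⟩
  have hnotId : ∀ X ∈ s, ¬ (X.Starter ∧ X.Terminator) := fun X hX h =>
    (hmem X hX).2 ⟨h.1.1, h.2.2, h.1.2⟩
  rw [(hcode P hP).1, (hcode Q hQ).1, (hcode P hP).2, (hcode Q hQ).2]
  rcases hPQ with ⟨hPs, hQt⟩ | ⟨hPt, hQs⟩
  · exact ⟨fun h => hnotId Q hQ ⟨h.2, hQt⟩, fun h => hnotId P hP ⟨hPs, h.1⟩⟩
  · exact ⟨fun h => hnotId P hP ⟨h.1, hPt⟩, fun h => hnotId Q hQ ⟨hQs, h.2⟩⟩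

end NormalForm

/-! ### Existence of the sparse representative -/

section Interfaces

theorem Conclist.ext' {U V : Conclist E A} (hev : U.events = V.events) (hord : U.evord = V.evord)
    (hlab : U.lab = V.lab) : U = V := by
  cases U; cases V; cases hev; cases hord; cases hlab; rfl

theorem ipoIso_refl (P : Ipomset E A) : IpoIso P P :=
  ⟨id, fun _ hx => hx, fun _ _ _ _ h => h, fun y hy => ⟨y, hy, rfl⟩, fun _ _ => Iff.rfl,
    fun _ _ => Iff.rfl, fun _ _ => rfl, fun _ _ _ _ => Iff.rfl, fun _ _ _ _ _ _ => Iff.rfl⟩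

theorem ClIso.trans {U V W : Conclist E A} (h₁ : ClIso U V) (h₂ : ClIso V W) : ClIso U W := by
  obtain ⟨f, hf⟩ := h₁
  obtain ⟨g, hg⟩ := h₂
  refine ⟨g ∘ f, fun x hx => hg.maps _ (hf.maps x hx), fun x hx y hy h =>
    hf.inj x hx y hy (hg.inj _ (hf.maps x hx) _ (hf.maps y hy) h), fun z hz => ?_,
    fun x hx => ?_, fun x hx y hy => ?_⟩
  · obtain ⟨y, hy, rfl⟩ := hg.surj z hz
    obtain ⟨x, hx, rfl⟩ := hf.surj y hy
    exact ⟨x, hx, rfl⟩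
  · rw [Function.comp, hg.lab_eq _ (hf.maps x hx), hf.lab_eq x hx]
  · rw [hf.evord_iff x hx y hy, hg.evord_iff _ (hf.maps x hx) _ (hf.maps y hy), Function.comp,
      Function.comp]

theorem ClIso.symm {U V : Conclist E A} (h : ClIso U V) : ClIso V U := by
  classical
  obtain ⟨f, hf⟩ := h
  let g : E → E := fun y => if hy : ∃ x ∈ U.events, f x = y then hy.choose else y
  have hg : ∀ y ∈ V.events, g y ∈ U.events ∧ f (g y) = y := fun y hy => by
    simpa only [g, dif_pos (hf.surj y hy)] using (hf.surj y hy).choose_spec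
  refine ⟨g, fun y hy => (hg y hy).1, fun y hy z hz h => ?_, fun x hx => ⟨f x, hf.maps x hx,
    hf.inj _ (hg _ (hf.maps x hx)).1 x hx (hg _ (hf.maps x hx)).2⟩, fun y hy => ?_,
    fun y hy z hz => ?_⟩
  · rw [← (hg y hy).2, ← (hg z hz).2, h]
  · rw [← hf.lab_eq _ (hg y hy).1, (hg y hy).2]
  · rw [hf.evord_iff _ (hg y hy).1 _ (hg z hz).1, (hg y hy).2, (hg z hz).2]

variable [DecidableEq E]

theorem IpoIso.clIso_srcIface {P Q : Ipomset E A} (h : IpoIso P Q) :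
    ClIso P.srcIface Q.srcIface := by
  obtain ⟨f, hf⟩ := h
  have hmaps : ∀ x ∈ P.src, f x ∈ Q.src := fun x hx => (hf.src_iff x (P.src_sub hx)).1 hx
  refine ⟨f, hmaps, fun x hx y hy => hf.inj x (P.src_sub hx) y (P.src_sub hy), fun y hy => ?_,
    fun x hx => ?_, fun x hx y hy => ?_⟩
  · obtain ⟨x, hx, rfl⟩ := hf.surj y (Q.src_sub hy)
    exact ⟨x, (hf.src_iff x hx).2 hy, rfl⟩
  · have hx : x ∈ P.src := hx
    simp [Ipomset.srcIface, hx, hmaps x hx, hf.lab_eq x (P.src_sub hx)]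
  · have hx : x ∈ P.src := hx
    have hy : y ∈ P.src := hy
    simp [Ipomset.srcIface, hx, hy, hmaps x hx, hmaps y hy, hf.evord_iff x (P.src_sub hx) y
      (P.src_sub hy) (P.src_min hy) (P.src_min hx)]

theorem IpoIso.clIso_tgtIface {P Q : Ipomset E A} (h : IpoIso P Q) :
    ClIso P.tgtIface Q.tgtIface := by
  obtain ⟨f, hf⟩ := h
  have hmaps : ∀ x ∈ P.tgt, f x ∈ Q.tgt := fun x hx => (hf.tgt_iff x (P.tgt_sub hx)).1 hx
  refine ⟨f, hmaps, fun x hx y hy => hf.inj x (P.tgt_sub hx) y (P.tgt_sub hy), fun y hy => ?_,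
    fun x hx => ?_, fun x hx y hy => ?_⟩
  · obtain ⟨x, hx, rfl⟩ := hf.surj y (Q.tgt_sub hy)
    exact ⟨x, (hf.tgt_iff x hx).2 hy, rfl⟩
  · have hx : x ∈ P.tgt := hx
    simp [Ipomset.tgtIface, hx, hmaps x hx, hf.lab_eq x (P.tgt_sub hx)]
  · have hx : x ∈ P.tgt := hx
    have hy : y ∈ P.tgt := hy
    simp [Ipomset.tgtIface, hx, hy, hmaps x hx, hmaps y hy, hf.evord_iff x (P.tgt_sub hx) y
      (P.tgt_sub hy) (P.tgt_max hx) (P.tgt_max hy)]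

variable {P Q R : Ipomset E A}

theorem IsGlueOf.srcIface_eq (h : IsGlueOf P Q R) : R.srcIface = P.srcIface := by
  obtain ⟨⟨-, hcap⟩, -, -, hevo, hsrc, -, hlabP, -⟩ := id h
  have hmem : ∀ {x}, x ∈ P.src → x ∈ Q.events → x ∈ P.tgt := fun hxP hxQ =>
    hcap ▸ Finset.mem_inter.2 ⟨P.src_sub hxP, hxQ⟩
  refine Conclist.ext' hsrc (funext₂ fun x y => propext ?_) (funext fun x => ?_)
  · simp only [Ipomset.srcIface, hsrc, hevo, glueEvord]
    refine and_congr_right fun hx => and_congr_right fun hy => or_iff_left_of_imp fun hQ => ?_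
    have hxy := Q.evord_mem hQ
    exact (h.evord_iff_of_mem_tgt (hmem hx hxy.1) (hmem hy hxy.2)).2 hQ
  · simp only [Ipomset.srcIface, hsrc]
    split_ifs with hx
    exacts [congrArg some (hlabP x (P.src_sub hx)), rfl]

theorem IsGlueOf.tgtIface_eq (h : IsGlueOf P Q R) : R.tgtIface = Q.tgtIface := by
  obtain ⟨⟨-, hcap⟩, -, -, hevo, -, htgt, -, hlabQ⟩ := id h
  have hmem : ∀ {x}, x ∈ Q.tgt → x ∈ P.events → x ∈ P.tgt := fun hxQ hxP =>
    hcap ▸ Finset.mem_inter.2 ⟨hxP, Q.tgt_sub hxQ⟩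
  refine Conclist.ext' htgt (funext₂ fun x y => propext ?_) (funext fun x => ?_)
  · simp only [Ipomset.tgtIface, htgt, hevo, glueEvord]
    refine and_congr_right fun hx => and_congr_right fun hy => or_iff_right_of_imp fun hP => ?_
    have hxy := P.evord_mem hP
    exact (h.evord_iff_of_mem_tgt (hmem hx hxy.1) (hmem hy hxy.2)).1 hP
  · simp only [Ipomset.tgtIface, htgt]
    split_ifs with hx
    exacts [congrArg some (hlabQ x (Q.tgt_sub hx)), rfl]

theorem IsGluing.clIso_srcIface (h : IsGluing P Q R) : ClIso P.srcIface R.srcIface := by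
  obtain ⟨P', Q', R', hPP, -, hRR, hG⟩ := h
  exact hPP.clIso_srcIface.trans (hG.srcIface_eq ▸ hRR.clIso_srcIface.symm)

theorem IsGluing.clIso_tgtIface (h : IsGluing P Q R) : ClIso R.tgtIface Q.tgtIface := by
  obtain ⟨P', Q', R', -, hQQ, hRR, hG⟩ := h
  exact hRR.clIso_tgtIface.trans (hG.tgtIface_eq ▸ hQQ.clIso_tgtIface.symm)

end Interfaces

section Existence

variable [DecidableEq E]

theorem letterOf_starter (W : Ipomset E A) (hW : W.Discrete) (V S : Finset E) :
    (letterOf W hW V S V).Starter :=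
  ⟨fun _ _ h => h, by simp [letterOf]⟩

theorem letterOf_terminator (W : Ipomset E A) (hW : W.Discrete) (V T : Finset E) :
    (letterOf W hW V V T).Terminator :=
  ⟨fun _ _ h => h, by simp [letterOf]⟩

theorem ipoIso_letterOf {X W : Ipomset E A} (hX : X.Discrete) (hW : W.Discrete) {V : Finset E}
    {f : E → E} (hmaps : ∀ x ∈ X.events, f x ∈ V ∩ W.events)
    (hinj : ∀ x ∈ X.events, ∀ y ∈ X.events, f x = f y → x = y)
    (hsurj : ∀ y ∈ V ∩ W.events, ∃ x ∈ X.events, f x = y)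
    (hlab : ∀ x ∈ X.events, W.lab (f x) = X.lab x)
    (hevord : ∀ x ∈ X.events, ∀ y ∈ X.events, X.evord x y ↔ W.evord (f x) (f y)) :
    IpoIso X (letterOf W hW V (X.src.image f) (X.tgt.image f)) := by
  have hmem_image : ∀ {S : Finset E}, S ⊆ X.events → ∀ x ∈ X.events, x ∈ S ↔ f x ∈ S.image f :=
    fun hS x hx => ⟨Finset.mem_image_of_mem f, fun h => by
      obtain ⟨a, ha, hfa⟩ := Finset.mem_image.1 h
      exact hinj a (hS ha) x hx hfa ▸ ha⟩
  refine ⟨f, hmaps, hinj, hsurj, fun x hx => ?_, fun x hx => ?_, hlab,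
    fun x _ y _ => ⟨False.elim, fun h => hX x y h⟩, fun x hx y hy _ _ => ?_⟩
  · simpa [letterOf, hmaps x hx] using hmem_image X.src_sub x hx
  · simpa [letterOf, hmaps x hx] using hmem_image X.tgt_sub x hx
  · simp only [letterOf]
    rw [hevord x hx y hy]
    exact ⟨fun h => ⟨hmaps x hx, hmaps y hy, h⟩, fun h => h.2.2⟩

theorem isGlueOf_letterOf_starter {Q : Ipomset E A} (hQ : Q.Starter) {S : Finset E}
    (hS : S ⊆ Q.src) :
    IsGlueOf (letterOf Q hQ.1 Q.src S Q.src) Q (letterOf Q hQ.1 Q.events S Q.events) := by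
  have hsrc : Q.src ∩ Q.events = Q.src := Finset.inter_eq_left.2 Q.src_sub
  have hS' : S ∩ Q.src = S := Finset.inter_eq_left.2 hS
  have hS'' : S ∩ Q.events = S := Finset.inter_eq_left.2 (hS.trans Q.src_sub)
  refine ⟨⟨Conclist.ext' ?_ ?_ ?_, ?_⟩, ?_, fun x y => ?_, fun x y => ?_, ?_, ?_,
    fun _ _ => rfl, fun _ _ => rfl⟩
  · simp [letterOf, Ipomset.tgtIface, Ipomset.srcIface, hsrc]
  · funext x y
    simp +contextual [letterOf, Ipomset.tgtIface, Ipomset.srcIface, hsrc]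
  · funext x
    simp [letterOf, Ipomset.tgtIface, Ipomset.srcIface, hsrc]
  · simp [letterOf, hsrc]
  · simpa [letterOf, hsrc] using Q.src_sub
  · simp only [letterOf, false_iff]
    exact not_glueLt (fun _ _ h => h) hQ.1
      (fun x hx _ _ => Or.inl (by simpa [letterOf] using hx)) x y
  · have := @Q.evord_mem x y
    simp only [letterOf, glueEvord, Finset.inter_self, hsrc]
    exact ⟨fun h => Or.inr h.2.2, fun h => h.elim (fun h => ⟨Q.src_sub h.1, Q.src_sub h.2.1,
      h.2.2⟩) fun h => ⟨(this h).1, (this h).2, h⟩⟩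
  · simp [letterOf, hsrc, hS', hS'']
  · simp [letterOf, hQ.2]

theorem isGlueOf_letterOf_terminator {P : Ipomset E A} (hP : P.Terminator) {T : Finset E}
    (hT : T ⊆ P.tgt) :
    IsGlueOf P (letterOf P hP.1 P.tgt P.tgt T) (letterOf P hP.1 P.events P.events T) := by
  have htgt : P.tgt ∩ P.events = P.tgt := Finset.inter_eq_left.2 P.tgt_sub
  have hT' : T ∩ P.tgt = T := Finset.inter_eq_left.2 hT
  have hT'' : T ∩ P.events = T := Finset.inter_eq_left.2 (hT.trans P.tgt_sub)
  refine ⟨⟨Conclist.ext' ?_ ?_ ?_, ?_⟩, ?_, fun x y => ?_, fun x y => ?_, ?_, ?_,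
    fun _ _ => rfl, fun _ _ => rfl⟩
  · simp [letterOf, Ipomset.tgtIface, Ipomset.srcIface, htgt]
  · funext x y
    simp +contextual [letterOf, Ipomset.tgtIface, Ipomset.srcIface, htgt]
  · funext x
    simp [letterOf, Ipomset.tgtIface, Ipomset.srcIface, htgt]
  · simpa [letterOf, htgt] using P.tgt_sub
  · simpa [letterOf, htgt] using P.tgt_sub
  · simp only [letterOf, false_iff]
    exact not_glueLt hP.1 (fun _ _ h => h)
      (fun _ _ y hy => Or.inr (by simpa [letterOf] using hy)) x y
  · have := @P.evord_mem x y
    simp only [letterOf, glueEvord, Finset.inter_self, htgt]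
    exact ⟨fun h => Or.inl h.2.2, fun h => h.elim (fun h => ⟨(this h).1, (this h).2, h⟩)
      fun h => ⟨P.tgt_sub h.1, P.tgt_sub h.2.1, h.2.2⟩⟩
  · simp [letterOf, hP.2]
  · simp [letterOf, htgt, hT', hT'']

theorem exists_isGluing_of_starter {P Q : Ipomset E A} (hP : P.Starter) (hQ : Q.Starter)
    (h : ClIso P.tgtIface Q.srcIface) : ∃ R, IsGluing P Q R ∧ R.Starter := by
  obtain ⟨f, hf⟩ := h
  have hPt : ∀ {x}, x ∈ P.events → x ∈ P.tgt := fun hx => hP.2 ▸ hx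
  have hmaps : ∀ {x}, x ∈ P.events → f x ∈ Q.src := fun hx => hf.maps _ (hPt hx)
  have himage : P.tgt.image f = Q.src := by
    ext y
    refine ⟨fun hy => ?_, fun hy => ?_⟩
    · obtain ⟨x, hx, rfl⟩ := Finset.mem_image.1 hy
      exact hf.maps x hx
    · obtain ⟨x, hx, rfl⟩ := hf.surj y hy
      exact Finset.mem_image_of_mem f hx
  have hPP := ipoIso_letterOf (V := Q.src) hP.1 hQ.1
    (fun x hx => Finset.mem_inter.2 ⟨hmaps hx, Q.src_sub (hmaps hx)⟩)
    (fun x hx y hy => hf.inj x (hPt hx) y (hPt hy))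
    (fun y hy => by
      obtain ⟨x, hx, rfl⟩ := hf.surj y (Finset.mem_inter.1 hy).1
      exact ⟨x, P.tgt_sub hx, rfl⟩)
    (fun x hx => by
      simpa [Ipomset.srcIface, Ipomset.tgtIface, hPt hx, hmaps hx] using hf.lab_eq x (hPt hx))
    (fun x hx y hy => by
      simpa [Ipomset.srcIface, Ipomset.tgtIface, hPt hx, hPt hy, hmaps hx, hmaps hy] using
        hf.evord_iff x (hPt hx) y (hPt hy))
  rw [himage] at hPP
  have hS : P.src.image f ⊆ Q.src := fun y hy => by
    obtain ⟨x, hx, rfl⟩ := Finset.mem_image.1 hy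
    exact hmaps (P.src_sub hx)
  exact ⟨_, ⟨_, Q, _, hPP, ipoIso_refl Q, ipoIso_refl _, isGlueOf_letterOf_starter hQ hS⟩,
    letterOf_starter _ _ _ _⟩

theorem exists_isGluing_of_terminator {P Q : Ipomset E A} (hP : P.Terminator)
    (hQ : Q.Terminator) (h : ClIso P.tgtIface Q.srcIface) :
    ∃ R, IsGluing P Q R ∧ R.Terminator := by
  obtain ⟨g, hg⟩ := h.symm
  have hQs : ∀ {y}, y ∈ Q.events → y ∈ Q.src := fun hy => hQ.2 ▸ hy
  have hmaps : ∀ {y}, y ∈ Q.events → g y ∈ P.tgt := fun hy => hg.maps _ (hQs hy)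
  have himage : Q.src.image g = P.tgt := by
    ext x
    refine ⟨fun hx => ?_, fun hx => ?_⟩
    · obtain ⟨y, hy, rfl⟩ := Finset.mem_image.1 hx
      exact hg.maps y hy
    · obtain ⟨y, hy, rfl⟩ := hg.surj x hx
      exact Finset.mem_image_of_mem g hy
  have hQQ := ipoIso_letterOf (V := P.tgt) hQ.1 hP.1
    (fun y hy => Finset.mem_inter.2 ⟨hmaps hy, P.tgt_sub (hmaps hy)⟩)
    (fun x hx y hy => hg.inj x (hQs hx) y (hQs hy))
    (fun x hx => by
      obtain ⟨y, hy, rfl⟩ := hg.surj x (Finset.mem_inter.1 hx).1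
      exact ⟨y, Q.src_sub hy, rfl⟩)
    (fun y hy => by
      simpa [Ipomset.srcIface, Ipomset.tgtIface, hQs hy, hmaps hy] using hg.lab_eq y (hQs hy))
    (fun x hx y hy => by
      simpa [Ipomset.srcIface, Ipomset.tgtIface, hQs hx, hQs hy, hmaps hx, hmaps hy] using
        hg.evord_iff x (hQs hx) y (hQs hy))
  rw [himage] at hQQ
  have hT : Q.tgt.image g ⊆ P.tgt := fun x hx => by
    obtain ⟨y, hy, rfl⟩ := Finset.mem_image.1 hx
    exact hmaps (Q.tgt_sub hy)
  exact ⟨_, ⟨P, _, _, ipoIso_refl P, hQQ, ipoIso_refl _, isGlueOf_letterOf_terminator hP hT⟩,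
    letterOf_terminator _ _ _ _⟩

end Existence

section SparseRepresentative

variable [DecidableEq E]

theorem Coherent.glue {u v : List (Ipomset E A)} {P Q R : Ipomset E A}
    (h : Coherent (u ++ P :: Q :: v)) (hR : StepLetter R) (hPR : ClIso P.srcIface R.srcIface)
    (hRQ : ClIso R.tgtIface Q.tgtIface) : Coherent (u ++ R :: v) := by
  obtain ⟨hmem, hch : List.IsChain _ _⟩ := h
  refine ⟨fun X hX => ?_, show List.IsChain _ _ from ?_⟩
  · rcases List.mem_append.1 hX with hX | hX
    · exact hmem X (by simp [hX])
    rcases List.mem_cons.1 hX with rfl | hX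
    · exact hR
    · exact hmem X (by simp [hX])
  rw [List.isChain_split] at hch ⊢
  refine ⟨?_, (List.isChain_cons_cons.1 hch.2).2.imp_head (y := R) fun hQ => hRQ.trans hQ⟩
  rw [List.isChain_append] at hch ⊢
  refine ⟨hch.1.1, List.isChain_singleton R, fun X hX Y hY => ?_⟩
  obtain rfl : Y = R := by simpa using hY.symm
  exact (hch.1.2.2 X hX P (by simp)).trans hPR

theorem Coherent.exists_glue {u v : List (Ipomset E A)} {P Q : Ipomset E A}
    (h : Coherent (u ++ P :: Q :: v))
    (hPQ : (P.Starter ∧ Q.Starter) ∨ (P.Terminator ∧ Q.Terminator)) :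
    ∃ R, IsGluing P Q R ∧ Coherent (u ++ R :: v) := by
  have hlink : ClIso P.tgtIface Q.srcIface :=
    (List.isChain_cons_cons.1 (List.isChain_append.1 h.2).2.1).1
  obtain ⟨R, hglue, hR⟩ : ∃ R, IsGluing P Q R ∧ StepLetter R := by
    rcases hPQ with ⟨hP, hQ⟩ | ⟨hP, hQ⟩
    · obtain ⟨R, hglue, hR⟩ := exists_isGluing_of_starter hP hQ hlink
      exact ⟨R, hglue, Or.inl hR⟩
    · obtain ⟨R, hglue, hR⟩ := exists_isGluing_of_terminator hP hQ hlink
      exact ⟨R, hglue, Or.inr hR⟩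
  exact ⟨R, hglue, h.glue hR hglue.clIso_srcIface hglue.clIso_tgtIface⟩

theorem Coherent.sparseWord_of_isChain {w : List (Ipomset E A)} (h : Coherent w)
    (hch : w.IsChain fun P Q => ¬ ((P.Starter ∧ Q.Starter) ∨ (P.Terminator ∧ Q.Terminator))) :
    SparseWord w := by
  by_cases hid : ∃ P, w = [P] ∧ P.IsIdentity
  · exact Or.inl hid
  have hS : ∀ {P : Ipomset E A}, P.IsIdentity → P.Starter := fun hP => ⟨hP.1, hP.2.2⟩
  have hT : ∀ {P : Ipomset E A}, P.IsIdentity → P.Terminator := fun hP => ⟨hP.1, hP.2.1⟩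
  refine Or.inr ⟨fun P hP => ⟨h.1 P hP, fun hPid => hid ⟨P, hch.eq_singleton hP fun Q hQ => ?_,
    hPid⟩⟩, hch.imp_of_mem_imp fun P Q hP hQ hPQ => ?_⟩
  · exact ⟨not_not.2 ((h.1 Q hQ).imp (⟨hS hPid, ·⟩) (⟨hT hPid, ·⟩)),
      not_not.2 ((h.1 Q hQ).imp (⟨·, hS hPid⟩) (⟨·, hT hPid⟩))⟩
  · rcases h.1 P hP with hP | hP <;> rcases h.1 Q hQ with hQ | hQ
    exacts [absurd (Or.inl ⟨hP, hQ⟩) hPQ, Or.inl ⟨hP, hQ⟩, Or.inr ⟨hP, hQ⟩,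
      absurd (Or.inr ⟨hP, hQ⟩) hPQ]

theorem Coherent.exists_sparseWord {w : List (Ipomset E A)} (h : Coherent w) :
    ∃ s, SparseWord s ∧ Coherent s ∧ StepEquiv w s := by
  rcases List.exists_eq_append_or_isChain_not
      (fun P Q => (P.Starter ∧ Q.Starter) ∨ (P.Terminator ∧ Q.Terminator)) w with
    ⟨u, P, Q, v, rfl, hPQ⟩ | hch
  · obtain ⟨R, hglue, hR⟩ := h.exists_glue hPQ
    obtain ⟨s, hs, hsc, hRs⟩ := hR.exists_sparseWord
    exact ⟨s, hs, hsc, (StepEquiv.glue u v P Q R h hPQ hglue).trans hRs⟩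
  · exact ⟨w, h.sparseWord_of_isChain hch, h, StepEquiv.refl w⟩
termination_by w.length
decreasing_by subst_vars; simp

end SparseRepresentative

theorem sparse_representative_unique_general [DecidableEq E]
    (w : List (Ipomset E A)) (hw : Coherent w) :
    ∃ s : List (Ipomset E A), SparseWord s ∧ Coherent s ∧ StepEquiv w s ∧
      ∀ s' : List (Ipomset E A), SparseWord s' → Coherent s' → StepEquiv w s' →
        s'.length = s.length ∧
        ∀ (i : ℕ) (h1 : i < s.length) (h2 : i < s'.length),
          IpoIso (s.get ⟨i, h1⟩) (s'.get ⟨i, h2⟩) := by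
  obtain ⟨s, hs, hsc, hws⟩ := hw.exists_sparseWord
  refine ⟨s, hs, hsc, hws, fun s' hs' hsc' hws' => ?_⟩
  have hcode : s.map Ipomset.code = s'.map Ipomset.code := by
    rw [← hs.normalForm_map_code, ← hs'.normalForm_map_code, ← hws.normalForm_map_code,
      hws'.normalForm_map_code]
  refine ⟨by simpa using (congrArg List.length hcode).symm, fun i h₁ h₂ => ?_⟩
  refine ipoIso_of_code_eq (hsc.1 _ (List.get_mem _ _)).discrete
    (hsc'.1 _ (List.get_mem _ _)).discrete ?_
  simpa [h₁, h₂] using congrArg (·[i]?) hcode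

/-- Every step sequence (every `~`-class of coherent words of
starters and terminators) contains exactly one sparse representative
(unique up to letterwise isomorphism, since words are words of isomorphism
classes). -/
theorem sparse_representative_unique [DecidableEq E] [Infinite E]
    (w : List (Ipomset E A)) (hw : Coherent w) (hne : w ≠ []) :
    ∃ s : List (Ipomset E A), SparseWord s ∧ Coherent s ∧ StepEquiv w s ∧
      ∀ s' : List (Ipomset E A), SparseWord s' → Coherent s' → StepEquiv w s' →
        s'.length = s.length ∧
        ∀ (i : ℕ) (h1 : i < s.length) (h2 : i < s'.length),
          IpoIso (s.get ⟨i, h1⟩) (s'.get ⟨i, h2⟩) :=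
  sparse_representative_unique_general w hw
end

section
/- Let f : P → Q be a subsumption with P ⊏ Q, let O = <_P ∖ <_Q (identifying <_P with its image in Q via f), and let ≼ on O be defined by (x, y) ≼ (x', y') iff x ≤_P x' and y' ≤_P y. Then ≼ is a partial order on O and has a maximal element (x₀, y₀). Moreover, the structure R that agrees with P except that <_R = <_P ∖ {(x₀, y₀)} and ⋖_R = ⋖_Q is an ipomset, the identity map P → R is an elementary subsumption, and f : R → Q is a subsumption. -/
set_option maxHeartbeats 1000000

universe u v w

variable {E : Type u} {A : Type v}

/-- `(x, y)` lies in `O = <_P ∖ <_Q` (identifying `<_P` with its image under `f`). -/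
def InO (P Q : Ipomset E A) (f : E → E) (x y : E) : Prop :=
  P.lt x y ∧ ¬ Q.lt (f x) (f y)

/-- The order `≼` on pairs: `(x, y) ≼ (x', y')` iff `x ≤_P x'` and `y' ≤_P y`. -/
def PrecOn (P : Ipomset E A) (p q : E × E) : Prop :=
  (p.1 = q.1 ∨ P.lt p.1 q.1) ∧ (q.2 = p.2 ∨ P.lt q.2 p.2)

section AuxRemoveMax

open Classical in
private lemma precOn_refl (P : Ipomset E A) (p : E × E) : PrecOn P p p :=
  ⟨Or.inl rfl, Or.inl rfl⟩

private lemma precOn_trans (P : Ipomset E A) {p q r : E × E}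
    (h1 : PrecOn P p q) (h2 : PrecOn P q r) : PrecOn P p r := by
  constructor
  · rcases h1.1 with h | h <;> rcases h2.1 with h' | h'
    · exact Or.inl (h.trans h')
    · exact Or.inr (h ▸ h')
    · exact Or.inr (h' ▸ h)
    · exact Or.inr (P.lt_trans h h')
  · rcases h1.2 with h | h <;> rcases h2.2 with h' | h'
    · exact Or.inl (h'.trans h)
    · exact Or.inr (h ▸ h')
    · exact Or.inr (h' ▸ h)
    · exact Or.inr (P.lt_trans h' h)

private lemma precOn_antisymm (P : Ipomset E A) {p q : E × E}
    (h1 : PrecOn P p q) (h2 : PrecOn P q p) : p = q := by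
  have e1 : p.1 = q.1 := by
    rcases h1.1 with h | h
    · exact h
    · rcases h2.1 with h' | h'
      · exact h'.symm
      · exact absurd (P.lt_trans h h') (P.lt_irrefl _)
  have e2 : p.2 = q.2 := by
    rcases h1.2 with h | h
    · exact h.symm
    · rcases h2.2 with h' | h'
      · exact h'
      · exact absurd (P.lt_trans h h') (P.lt_irrefl _)
  exact Prod.ext e1 e2

/-- If the obstruction set is empty, `f` is an isomorphism. -/
private lemma iso_of_noO (P Q : Ipomset E A) (f : E → E)
    (hf : IsSubsumption P Q f) (hO : ∀ x y, ¬ InO P Q f x y) : IpoIso P Q := by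
  have hlt : ∀ x y, P.lt x y → Q.lt (f x) (f y) := by
    intro x y h
    by_contra hq
    exact hO x y ⟨h, hq⟩
  refine ⟨f, ?_, hf.inj, hf.surj, hf.src_iff, hf.tgt_iff, hf.lab_eq, ?_, ?_⟩
  · exact hf.maps
  · intro x hx y hy
    exact ⟨hf.lt_imp x hx y hy, hlt x y⟩
  · intro x hx y hy hnxy hnyx
    constructor
    · exact hf.evord_imp x hx y hy hnxy hnyx
    · intro hq
      have hne : x ≠ y := by
        rintro rfl
        exact Q.evord_irrefl _ hq
      rcases P.order_total hx hy hne with h | h | h | h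
      · exact absurd h hnxy
      · exact absurd h hnyx
      · exact h
      · have := hf.evord_imp y hy x hx hnyx hnxy h
        exact absurd (Q.evord_trans hq this) (Q.evord_irrefl _)

/-- Existence of a maximal element of `O` under `PrecOn`. -/
private lemma exists_maximal_O (P Q : Ipomset E A) (f : E → E)
    (hf : IsSubsumption P Q f) (hni : ¬ IpoIso P Q) :
    ∃ x₀ y₀ : E, InO P Q f x₀ y₀ ∧
      ∀ x' y', InO P Q f x' y' → PrecOn P (x₀, y₀) (x', y') →
        x' = x₀ ∧ y' = y₀ := by
  classical
  set S : Finset (E × E) :=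
    (P.events ×ˢ P.events).filter (fun p => InO P Q f p.1 p.2) with hS
  have hmemS : ∀ p : E × E, p ∈ S ↔ InO P Q f p.1 p.2 := by
    intro p
    simp only [hS, Finset.mem_filter, Finset.mem_product, and_iff_right_iff_imp]
    intro h
    exact P.lt_mem h.1
  have hSne : S.Nonempty := by
    by_contra hemp
    refine hni (iso_of_noO P Q f hf ?_)
    intro x y hxy
    exact hemp ⟨(x, y), (hmemS (x, y)).mpr hxy⟩
  obtain ⟨p₀, hp₀S, hp₀max⟩ := S.exists_max_image
    (fun p => (S.filter (fun q => PrecOn P q p)).card) hSne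
  refine ⟨p₀.1, p₀.2, (hmemS p₀).mp hp₀S, ?_⟩
  intro x' y' hO' hprec
  by_contra hne
  have hne' : (x', y') ≠ p₀ := by
    intro h
    exact hne ⟨congrArg Prod.fst h, congrArg Prod.snd h⟩
  have hmem' : (x', y') ∈ S := (hmemS _).mpr hO'
  have hsub : S.filter (fun q => PrecOn P q p₀) ⊂
      S.filter (fun q => PrecOn P q (x', y')) := by
    constructor
    · intro q hq
      rw [Finset.mem_filter] at hq ⊢
      exact ⟨hq.1, precOn_trans P hq.2 hprec⟩
    · intro hcon
      have : (x', y') ∈ S.filter (fun q => PrecOn P q p₀) := by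
        refine hcon ?_
        rw [Finset.mem_filter]
        exact ⟨hmem', precOn_refl P _⟩
      rw [Finset.mem_filter] at this
      exact hne' (precOn_antisymm P this.2 hprec)
  have := Finset.card_lt_card hsub
  have h2 := hp₀max (x', y') hmem'
  omega

end AuxRemoveMax

/-- For a subsumption `f : P → Q` with `P ⊏ Q`, the relation `≼` is
a partial order on `O = <_P ∖ <_Q` with a maximal element `(x₀, y₀)`; the
structure `R` agreeing with `P` except `<_R = <_P ∖ {(x₀,y₀)}` and `⋖_R = ⋖_Q`
is an ipomset, `id : P → R` is an elementary subsumption, and `f : R → Q` is a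
subsumption. -/
theorem remove_maximal_pair (P Q : Ipomset E A) (f : E → E)
    (hf : IsSubsumption P Q f) (hni : ¬ IpoIso P Q) :
    (∀ p q : E × E, InO P Q f p.1 p.2 → InO P Q f q.1 q.2 →
      PrecOn P p q → PrecOn P q p → p = q) ∧
    (∀ p q r : E × E, InO P Q f p.1 p.2 → InO P Q f q.1 q.2 → InO P Q f r.1 r.2 →
      PrecOn P p q → PrecOn P q r → PrecOn P p r) ∧
    ∃ x₀ y₀ : E, InO P Q f x₀ y₀ ∧
      (∀ x' y', InO P Q f x' y' → PrecOn P (x₀, y₀) (x', y') →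
        x' = x₀ ∧ y' = y₀) ∧
      ∃ R : Ipomset E A,
        R.events = P.events ∧ R.src = P.src ∧ R.tgt = P.tgt ∧
        (∀ x ∈ P.events, R.lab x = P.lab x) ∧
        (∀ x y, R.lt x y ↔ (P.lt x y ∧ ¬(x = x₀ ∧ y = y₀))) ∧
        (∀ x y, R.evord x y ↔
          (x ∈ P.events ∧ y ∈ P.events ∧ Q.evord (f x) (f y))) ∧
        IsSubsumption P R id ∧
        (∃! p : E × E, P.lt p.1 p.2 ∧ ¬ R.lt p.1 p.2) ∧
        IsSubsumption R Q f := by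
  refine ⟨fun p q _ _ h1 h2 => precOn_antisymm P h1 h2,
    fun p q r _ _ _ h1 h2 => precOn_trans P h1 h2, ?_⟩
  obtain ⟨x₀, y₀, hO₀, hmax⟩ := exists_maximal_O P Q f hf hni
  refine ⟨x₀, y₀, hO₀, hmax, ?_⟩
  have hx₀mem := (P.lt_mem hO₀.1).1
  have hy₀mem := (P.lt_mem hO₀.1).2
  -- key: R.lt is transitive
  have hltR_trans : ∀ {x y z : E}, (P.lt x y ∧ ¬(x = x₀ ∧ y = y₀)) →
      (P.lt y z ∧ ¬(y = x₀ ∧ z = y₀)) → (P.lt x z ∧ ¬(x = x₀ ∧ z = y₀)) := by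
    rintro x y z ⟨hxy, hxy'⟩ ⟨hyz, hyz'⟩
    refine ⟨P.lt_trans hxy hyz, ?_⟩
    rintro ⟨rfl, rfl⟩
    -- x < y < z in P (with (x,z) the maximal pair); contradiction with maximality
    by_cases hq : Q.lt (f x) (f y)
    · by_cases hq' : Q.lt (f y) (f z)
      · exact hO₀.2 (Q.lt_trans hq hq')
      · have hOy : InO P Q f y z := ⟨hyz, hq'⟩
        have := hmax y z hOy ⟨Or.inr hxy, Or.inl rfl⟩
        exact P.lt_irrefl _ (this.1 ▸ hxy)
    · have hOy : InO P Q f x y := ⟨hxy, hq⟩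
      have := hmax x y hOy ⟨Or.inl rfl, Or.inr hyz⟩
      exact P.lt_irrefl _ (this.2 ▸ hyz)
  -- R.evord of the removed pair
  have hev₀ : Q.evord (f x₀) (f y₀) ∨ Q.evord (f y₀) (f x₀) := by
    have hne : x₀ ≠ y₀ := fun h => P.lt_irrefl _ (h ▸ hO₀.1)
    have hfne : f x₀ ≠ f y₀ := fun h => hne (hf.inj _ hx₀mem _ hy₀mem h)
    rcases Q.order_total (hf.maps _ hx₀mem) (hf.maps _ hy₀mem) hfne with h | h | h | h
    · exact absurd h hO₀.2
    · exact absurd (hf.lt_imp _ hy₀mem _ hx₀mem h)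
        (fun h' => P.lt_irrefl _ (P.lt_trans hO₀.1 h'))
    · exact Or.inl h
    · exact Or.inr h
  refine ⟨{
    events := P.events
    lt := fun x y => P.lt x y ∧ ¬(x = x₀ ∧ y = y₀)
    evord := fun x y => x ∈ P.events ∧ y ∈ P.events ∧ Q.evord (f x) (f y)
    src := P.src
    tgt := P.tgt
    lab := P.lab
    lt_mem := fun h => P.lt_mem h.1
    evord_mem := fun h => ⟨h.1, h.2.1⟩
    lt_irrefl := fun x h => P.lt_irrefl x h.1
    lt_trans := hltR_trans
    evord_irrefl := fun x h => Q.evord_irrefl _ h.2.2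
    evord_trans := fun h1 h2 => ⟨h1.1, h2.2.1, Q.evord_trans h1.2.2 h2.2.2⟩
    order_total := by
      intro x y hx hy hne
      by_cases hxy : P.lt x y
      · by_cases hp : x = x₀ ∧ y = y₀
        · rcases hp with ⟨rfl, rfl⟩
          rcases hev₀ with h | h
          · exact Or.inr (Or.inr (Or.inl ⟨hx, hy, h⟩))
          · exact Or.inr (Or.inr (Or.inr ⟨hy, hx, h⟩))
        · exact Or.inl ⟨hxy, hp⟩
      · by_cases hyx : P.lt y x
        · by_cases hp : y = x₀ ∧ x = y₀
          · rcases hp with ⟨rfl, rfl⟩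
            rcases hev₀ with h | h
            · exact Or.inr (Or.inr (Or.inr ⟨hy, hx, h⟩))
            · exact Or.inr (Or.inr (Or.inl ⟨hx, hy, h⟩))
          · exact Or.inr (Or.inl ⟨hyx, hp⟩)
        · rcases P.order_total hx hy hne with h | h | h | h
          · exact absurd h hxy
          · exact absurd h hyx
          · exact Or.inr (Or.inr (Or.inl
              ⟨hx, hy, hf.evord_imp x hx y hy hxy hyx h⟩))
          · exact Or.inr (Or.inr (Or.inr
              ⟨hy, hx, hf.evord_imp y hy x hx hyx hxy h⟩))
    src_sub := P.src_sub
    tgt_sub := P.tgt_sub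
    src_min := fun h h' => P.src_min h h'.1
    tgt_max := fun h h' => P.tgt_max h h'.1 }, rfl, rfl, rfl,
    fun _ _ => rfl, fun _ _ => Iff.rfl, fun _ _ => Iff.rfl, ?_, ?_, ?_⟩
  · -- IsSubsumption P R id
    exact {
      maps := fun x hx => hx
      inj := fun x _ y _ h => h
      surj := fun y hy => ⟨y, hy, rfl⟩
      src_iff := fun x _ => Iff.rfl
      tgt_iff := fun x _ => Iff.rfl
      lab_eq := fun x _ => rfl
      lt_imp := fun x _ y _ h => h.1
      evord_imp := fun x hx y hy hnxy hnyx h =>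
        ⟨hx, hy, hf.evord_imp x hx y hy hnxy hnyx h⟩ }
  · -- unique removed pair
    refine ⟨(x₀, y₀), ⟨hO₀.1, fun h => h.2 ⟨rfl, rfl⟩⟩, ?_⟩
    rintro ⟨a, b⟩ ⟨hab, hnR⟩
    by_cases h : a = x₀ ∧ b = y₀
    · exact Prod.ext h.1 h.2
    · exact absurd ⟨hab, h⟩ hnR
  · -- IsSubsumption R Q f
    exact {
      maps := hf.maps
      inj := hf.inj
      surj := hf.surj
      src_iff := hf.src_iff
      tgt_iff := hf.tgt_iff
      lab_eq := hf.lab_eq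
      lt_imp := fun x hx y hy h => ⟨hf.lt_imp x hx y hy h, by
        rintro ⟨rfl, rfl⟩; exact hO₀.2 h⟩
      evord_imp := fun x _ y _ _ _ h => h.2.2 }
end
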